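/- arXiv:1811.08862 — 13 statements merged into one kernel-verified Lean document; each statement's English description precedes it below -/
import Mathlib

section
/- Let 1 ≤ r < s ≤ n. If s ≤ n − 1, then δₙ a_{rs} δₙ⁻¹ = a_{r+1, s+1}; and if s = n, then δₙ a_{rn} δₙ⁻¹ = a_{1, r+1}. -/
/-- Conjugation of the Birman–Ko–Lee generators by the dual Garside element
`δₙ = σ₁σ₂⋯σ_{n-1}`: for `1 ≤ r < s ≤ n`, if `s ≤ n-1` then
`δₙ a_{rs} δₙ⁻¹ = a_{r+1,s+1}`, and if `s = n` then `δₙ a_{rn} δₙ⁻¹ = a_{1,r+1}`. -/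
theorem delta_conj_bkl {G : Type*} [Group G] (n : ℕ) (hn : 2 ≤ n) (σ : ℕ → G)
    (hfar : ∀ i j, 1 ≤ i → 1 ≤ j → i ≤ n - 1 → j ≤ n - 1 → i + 2 ≤ j →
      σ i * σ j = σ j * σ i)
    (hbraid : ∀ i, 1 ≤ i → i ≤ n - 2 →
      σ i * σ (i + 1) * σ i = σ (i + 1) * σ i * σ (i + 1))
    (δ : G) (hδ : δ = ((List.range' 1 (n - 1)).map σ).prod)
    (a : ℕ → ℕ → G)
    (ha : ∀ r s, 1 ≤ r → r < s → s ≤ n →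
      a r s = ((List.range' r (s - 1 - r)).map σ).prod * σ (s - 1) *
        (((List.range' r (s - 1 - r)).map σ).prod)⁻¹)
    (r s : ℕ) (hr : 1 ≤ r) (hrs : r < s) (hs : s ≤ n) :
    (s ≤ n - 1 → δ * a r s * δ⁻¹ = a (r + 1) (s + 1)) ∧
    (s = n → δ * a r s * δ⁻¹ = a 1 (r + 1)) := by
  set P : ℕ → ℕ → G := fun b k => ((List.range' b k).map σ).prod with hPdef
  have Psucc : ∀ b k, P b (k + 1) = σ b * P (b + 1) k := by
    intro b k
    simp [hPdef, List.range'_succ]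
  have Psplit : ∀ b k₁ k₂, P b (k₁ + k₂) = P b k₁ * P (b + k₁) k₂ := by
    intro b k₁ k₂
    have := (List.range'_append (s := b) (m := k₁) (n := k₂) (step := 1)).trans (congrArg (List.range' b · 1) (Nat.add_comm k₁ k₂))
    simp only [one_mul] at this
    rw [hPdef]
    simp only [Nat.add_comm k₁ k₂]
    rw [← this, List.map_append, List.prod_append]
  have Pone : ∀ b, P b 1 = σ b := by intro b; simp [hPdef]
  have hfold : ∀ b k, ((List.range' b k).map σ).prod = P b k := fun _ _ => rfl
  -- commutation of σ j with a block of smaller-index generators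
  have commP : ∀ k b j, 1 ≤ b → b + k + 1 ≤ j → j ≤ n - 1 → σ j * P b k = P b k * σ j := by
    intro k
    induction k with
    | zero => intro b j _ _ _; simp [hPdef]
    | succ k ih =>
      intro b j hb h1 h2
      rw [Psucc, ← mul_assoc, ← hfar b j hb (by omega) (by omega) h2 (by omega),
        mul_assoc, ih (b + 1) j (by omega) (by omega) h2, mul_assoc]
  -- commutation of σ j with a block of larger-index generators
  have commP' : ∀ k b j, 1 ≤ j → j + 2 ≤ b → b + k ≤ n → σ j * P b k = P b k * σ j := by
    intro k
    induction k with
    | zero => intro b j _ _ _; simp [hPdef]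
    | succ k ih =>
      intro b j hj h1 h2
      rw [Psucc, ← mul_assoc, hfar j b hj (by omega) (by omega) (by omega) h1,
        mul_assoc, ih (b + 1) j hj (by omega) (by omega), mul_assoc]
  -- the shift identity δ σ_i = σ_{i+1} δ
  have shift : ∀ i, 1 ≤ i → i + 2 ≤ n → δ * σ i = σ (i + 1) * δ := by
    intro i hi hin
    have hsplit : δ = P 1 (i - 1) * σ i * σ (i + 1) * P (i + 2) (n - 2 - i) := by
      rw [hδ]
      have : n - 1 = (i - 1) + (1 + (1 + (n - 2 - i))) := by omega
      rw [show ((List.range' 1 (n-1)).map σ).prod = P 1 (n - 1) from rfl, this,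
        Psplit, Psplit, Psplit, Pone, Pone]
      have e1 : 1 + (i - 1) = i := by omega
      have e2 : i + 1 + 1 = i + 2 := by omega
      rw [e1, e2, ← mul_assoc, ← mul_assoc]
    rw [hsplit]
    have hc1 : σ i * P (i + 2) (n - 2 - i) = P (i + 2) (n - 2 - i) * σ i :=
      commP' (n - 2 - i) (i + 2) i hi le_rfl (by omega)
    have hc2 : σ (i + 1) * P 1 (i - 1) = P 1 (i - 1) * σ (i + 1) :=
      commP (i - 1) 1 (i + 1) le_rfl (by omega) (by omega)
    calc P 1 (i-1) * σ i * σ (i+1) * P (i+2) (n-2-i) * σ i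
        = P 1 (i-1) * (σ i * σ (i+1) * σ i) * P (i+2) (n-2-i) := by
          rw [mul_assoc _ _ (σ i), ← hc1]; group
      _ = P 1 (i-1) * (σ (i+1) * σ i * σ (i+1)) * P (i+2) (n-2-i) := by
          rw [hbraid i hi (by omega)]
      _ = σ (i+1) * (P 1 (i-1) * σ i * σ (i+1) * P (i+2) (n-2-i)) := by
          rw [show P 1 (i-1) * (σ (i+1) * σ i * σ (i+1)) = (P 1 (i-1) * σ (i+1)) * (σ i * σ (i+1)) by group, ← hc2]
          group
  have shiftC : ∀ i, 1 ≤ i → i + 2 ≤ n → δ * σ i * δ⁻¹ = σ (i + 1) := by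
    intro i hi hin
    rw [shift i hi hin]; group
  -- conjugation of a block product
  have prodShift : ∀ k b, 1 ≤ b → b + k + 1 ≤ n → δ * P b k * δ⁻¹ = P (b + 1) k := by
    intro k
    induction k with
    | zero => intro b _ _; simp [hPdef]
    | succ k ih =>
      intro b hb hbn
      rw [Psucc, Psucc,
        show δ * (σ b * P (b+1) k) * δ⁻¹ = (δ * σ b * δ⁻¹) * (δ * P (b+1) k * δ⁻¹) by group,
        shiftC b hb (by omega), ih (b + 1) (by omega) (by omega)]
  constructor
  · -- case s ≤ n - 1
    intro hs1
    have e1 : s + 1 - 1 - (r + 1) = s - 1 - r := by omega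
    have e2 : s + 1 - 1 = s := by omega
    rw [ha r s hr hrs hs, ha (r+1) (s+1) (by omega) (by omega) (by omega), e1, e2]
    simp only [hfold]
    have h1 : δ * P r (s - 1 - r) * δ⁻¹ = P (r + 1) (s - 1 - r) :=
      prodShift (s - 1 - r) r hr (by omega)
    have h2 : δ * σ (s - 1) * δ⁻¹ = σ s := by
      have := shiftC (s - 1) (by omega) (by omega)
      rwa [show s - 1 + 1 = s by omega] at this
    rw [show δ * (P r (s-1-r) * σ (s-1) * (P r (s-1-r))⁻¹) * δ⁻¹
        = (δ * P r (s-1-r) * δ⁻¹) * (δ * σ (s-1) * δ⁻¹) * (δ * P r (s-1-r) * δ⁻¹)⁻¹ by group,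
      h1, h2]
  · -- case s = n
    intro hsn
    rw [hsn]
    -- downward induction via d = n - 1 - r
    suffices H : ∀ d r, 1 ≤ r → r + d + 1 = n → δ * a r n * δ⁻¹ = a 1 (r + 1) from
      H (n - 1 - r) r hr (by omega)
    intro d
    induction d with
    | zero =>
      intro r hr1 hrn
      have hr' : r = n - 1 := by omega
      have harn : a r n = σ (n - 1) := by
        rw [ha r n hr1 (by omega) le_rfl, show n - 1 - r = 0 by omega]
        simp
      have h2 : a 1 (r + 1) = P 1 (n - 2) * σ (n - 1) * (P 1 (n - 2))⁻¹ := by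
        rw [ha 1 (r + 1) le_rfl (by omega) (by omega),
          show r + 1 - 1 - 1 = n - 2 by omega, show r + 1 - 1 = n - 1 by omega]
      have hδ' : δ = P 1 (n - 2) * σ (n - 1) := by
        have h := Psplit 1 (n - 2) 1
        rw [Pone, show 1 + (n - 2) = n - 1 by omega, show n - 2 + 1 = n - 1 by omega] at h
        rw [hδ, hfold, h]
      rw [harn, h2, hδ']
      group
    | succ d ih =>
      intro r hr1 hrn
      have hsplit : a r n = σ r * a (r + 1) n * (σ r)⁻¹ := by
        rw [ha r n hr1 (by omega) le_rfl, ha (r+1) n (by omega) (by omega) le_rfl,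
          show n - 1 - r = (n - 1 - (r + 1)) + 1 by omega]
        simp only [hfold]
        rw [Psucc]
        group
      rw [hsplit,
        show δ * (σ r * a (r+1) n * (σ r)⁻¹) * δ⁻¹
          = (δ * σ r * δ⁻¹) * (δ * a (r+1) n * δ⁻¹) * (δ * σ r * δ⁻¹)⁻¹ by group,
        shiftC r hr1 (by omega), ih (r + 1) (by omega) (by omega)]
      -- now show σ (r+1) * a 1 (r+2) * σ (r+1)⁻¹ = a 1 (r+1)
      rw [ha 1 (r + 2) le_rfl (by omega) (by omega),
        show r + 2 - 1 - 1 = r by omega, show r + 2 - 1 = r + 1 by omega,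
        ha 1 (r + 1) le_rfl (by omega) (by omega),
        show r + 1 - 1 - 1 = r - 1 by omega, show r + 1 - 1 = r by omega]
      simp only [hfold]
      have hPr : P 1 r = P 1 (r - 1) * σ r := by
        have h := Psplit 1 (r - 1) 1
        rw [Pone, show 1 + (r - 1) = r by omega, show r - 1 + 1 = r by omega] at h
        exact h
      have hc : σ (r + 1) * P 1 (r - 1) = P 1 (r - 1) * σ (r + 1) :=
        commP (r - 1) 1 (r + 1) le_rfl (by omega) (by omega)
      have hb : σ r * σ (r + 1) * σ r = σ (r + 1) * σ r * σ (r + 1) :=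
        hbraid r hr1 (by omega)
      rw [hPr]
      have hb2 : σ (r+1) * σ r * σ (r+1) * (σ r)⁻¹ * (σ (r+1))⁻¹ = σ r := by
        rw [← hb]; group
      have hcinv : (P 1 (r-1))⁻¹ * (σ (r+1))⁻¹ = (σ (r+1))⁻¹ * (P 1 (r-1))⁻¹ := by
        rw [← mul_inv_rev, hc, mul_inv_rev]
      calc σ (r+1) * (P 1 (r-1) * σ r * σ (r+1) * (P 1 (r-1) * σ r)⁻¹) * (σ (r+1))⁻¹
          = (σ (r+1) * P 1 (r-1)) * (σ r * σ (r+1) * (σ r)⁻¹) * ((P 1 (r-1))⁻¹ * (σ (r+1))⁻¹) := by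
            group
        _ = P 1 (r-1) * (σ (r+1) * (σ r * σ (r+1) * (σ r)⁻¹) * (σ (r+1))⁻¹) * (P 1 (r-1))⁻¹ := by
            rw [hc, hcinv]; group
        _ = P 1 (r-1) * σ r * (P 1 (r-1))⁻¹ := by
            rw [show σ (r+1) * (σ r * σ (r+1) * (σ r)⁻¹) * (σ (r+1))⁻¹
              = σ (r+1) * σ r * σ (r+1) * (σ r)⁻¹ * (σ (r+1))⁻¹ by group, hb2, mul_assoc]
end

section
/- For all integers p, q ≥ 1, σ₁^p a₁₃^q = σ₂⁻¹ (σ₁⁻¹ σ₂^{p−1} σ₁⁻¹ σ₂^{q−1} δ₃²) a₁₃. -/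
private lemma braid_key {G : Type*} [Group G] (a b : G) (h : a * b * a = b * a * b) :
    ∀ n : ℕ, a ^ n * b * a = b * a * b ^ n
  | 0 => by group
  | n + 1 => by
    calc a ^ (n + 1) * b * a = a * (a ^ n * b * a) := by group
    _ = a * (b * a * b ^ n) := by rw [braid_key a b h n]
    _ = (a * b * a) * b ^ n := by group
    _ = (b * a * b) * b ^ n := by rw [h]
    _ = b * a * b ^ (n + 1) := by group

/-- For `p, q ≥ 1`, `σ₁^p a₁₃^q = σ₂⁻¹ (σ₁⁻¹ σ₂^{p-1} σ₁⁻¹ σ₂^{q-1} δ₃²) a₁₃`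
where `δ₃ = σ₁σ₂` and `a₁₃ = σ₁σ₂σ₁⁻¹`. -/
theorem sigma1_a13_rewrite {G : Type*} [Group G] (σ₁ σ₂ : G)
    (hb : σ₁ * σ₂ * σ₁ = σ₂ * σ₁ * σ₂) (δ a : G)
    (hδ : δ = σ₁ * σ₂) (ha : a = σ₁ * σ₂ * σ₁⁻¹)
    (p q : ℕ) (hp : 1 ≤ p) (hq : 1 ≤ q) :
    σ₁ ^ p * a ^ q =
      σ₂⁻¹ * (σ₁⁻¹ * σ₂ ^ (p - 1) * σ₁⁻¹ * σ₂ ^ (q - 1) * δ ^ 2) * a := by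
  subst hδ ha
  obtain ⟨m, rfl⟩ : ∃ m, p = m + 1 := ⟨p - 1, (Nat.succ_pred_eq_of_pos hp).symm⟩
  obtain ⟨n, rfl⟩ : ∃ n, q = n + 1 := ⟨q - 1, (Nat.succ_pred_eq_of_pos hq).symm⟩
  simp only [Nat.add_sub_cancel]
  have h1 : σ₁ ^ (n + 2) * σ₂ * σ₁ = σ₂ * σ₁ * σ₂ ^ (n + 2) := braid_key σ₁ σ₂ hb (n + 2)
  have h2 : σ₂ ^ (m + 2) * σ₁ * σ₂ = σ₁ * σ₂ * σ₁ ^ (m + 2) := braid_key σ₂ σ₁ hb.symm (m + 2)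
  have h3 : σ₂ ^ n * σ₁ * σ₂ = σ₁ * σ₂ * σ₁ ^ n := braid_key σ₂ σ₁ hb.symm n
  calc σ₁ ^ (m + 1) * (σ₁ * σ₂ * σ₁⁻¹) ^ (n + 1)
      = σ₁ ^ (m + 1) * (σ₁ * σ₂ ^ (n + 1) * σ₁⁻¹) := by rw [conj_pow]
    _ = σ₂⁻¹ * σ₁⁻¹ * (σ₁ * σ₂ * σ₁ ^ (m + 2)) * σ₂ ^ (n + 1) * σ₁⁻¹ := by group
    _ = σ₂⁻¹ * σ₁⁻¹ * (σ₂ ^ (m + 2) * σ₁ * σ₂) * σ₂ ^ (n + 1) * σ₁⁻¹ := by rw [h2]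
    _ = σ₂⁻¹ * σ₁⁻¹ * σ₂ ^ (m + 1) * (σ₂ * σ₁ * σ₂ ^ (n + 2)) * σ₁⁻¹ := by group
    _ = σ₂⁻¹ * σ₁⁻¹ * σ₂ ^ (m + 1) * (σ₁ ^ (n + 2) * σ₂ * σ₁) * σ₁⁻¹ := by rw [h1]
    _ = σ₂⁻¹ * σ₁⁻¹ * σ₂ ^ (m + 1) * σ₁ ^ (n + 1) * (σ₁ * σ₂ * σ₁) * σ₁⁻¹ := by group
    _ = σ₂⁻¹ * σ₁⁻¹ * σ₂ ^ (m + 1) * σ₁ ^ (n + 1) * (σ₂ * σ₁ * σ₂) * σ₁⁻¹ := by rw [hb]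
    _ = σ₂⁻¹ * σ₁⁻¹ * σ₂ ^ m * σ₁⁻¹ * (σ₁ * σ₂ * σ₁ ^ n) * σ₁ * σ₂ * σ₁ * σ₂ * σ₁⁻¹ := by group
    _ = σ₂⁻¹ * σ₁⁻¹ * σ₂ ^ m * σ₁⁻¹ * (σ₂ ^ n * σ₁ * σ₂) * σ₁ * σ₂ * σ₁ * σ₂ * σ₁⁻¹ := by
        rw [h3]
    _ = σ₂⁻¹ * (σ₁⁻¹ * σ₂ ^ m * σ₁⁻¹ * σ₂ ^ n * (σ₁ * σ₂) ^ 2) * (σ₁ * σ₂ * σ₁⁻¹) := by rw [sq]; group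
end

section
/- For all integers p, q, r ≥ 1, σ₁^p a₁₃^q σ₂^r = σ₂⁻¹ (δ₃³ σ₁⁻¹ σ₂^{p−1} σ₁⁻¹ σ₂^{q−1} σ₁⁻¹ σ₂^{r−1}) σ₂. -/
private lemma swap_pow {G : Type*} [Group G] {g x y : G} (h : g * x = y * g) (n : ℕ) :
    g * x ^ n = y ^ n * g := by
  induction n with
  | zero => simp
  | succ n ih =>
      rw [pow_succ, pow_succ, ← mul_assoc, ih, mul_assoc, h, ← mul_assoc]

/-- For `p, q, r ≥ 1`,
`σ₁^p a₁₃^q σ₂^r = σ₂⁻¹ (δ₃³ σ₁⁻¹ σ₂^{p-1} σ₁⁻¹ σ₂^{q-1} σ₁⁻¹ σ₂^{r-1}) σ₂`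
where `δ₃ = σ₁σ₂` and `a₁₃ = σ₁σ₂σ₁⁻¹`. -/
theorem sigma1_a13_sigma2_rewrite {G : Type*} [Group G] (σ₁ σ₂ : G)
    (hb : σ₁ * σ₂ * σ₁ = σ₂ * σ₁ * σ₂) (δ a : G)
    (hδ : δ = σ₁ * σ₂) (ha : a = σ₁ * σ₂ * σ₁⁻¹)
    (p q r : ℕ) (hp : 1 ≤ p) (hq : 1 ≤ q) (hr : 1 ≤ r) :
    σ₁ ^ p * a ^ q * σ₂ ^ r =
      σ₂⁻¹ * (δ ^ 3 * σ₁⁻¹ * σ₂ ^ (p - 1) * σ₁⁻¹ * σ₂ ^ (q - 1) * σ₁⁻¹ *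
        σ₂ ^ (r - 1)) * σ₂ := by
  subst hδ ha
  obtain ⟨P, rfl⟩ : ∃ n, p = n + 1 := ⟨p - 1, (Nat.succ_pred_eq_of_pos hp).symm⟩
  obtain ⟨Q, rfl⟩ : ∃ n, q = n + 1 := ⟨q - 1, (Nat.succ_pred_eq_of_pos hq).symm⟩
  obtain ⟨R, rfl⟩ : ∃ n, r = n + 1 := ⟨r - 1, (Nat.succ_pred_eq_of_pos hr).symm⟩
  simp only [Nat.add_sub_cancel]
  -- basic braid consequences
  have e1i : (σ₁ * σ₂ * σ₁) * σ₁⁻¹ = σ₂⁻¹ * (σ₁ * σ₂ * σ₁) := by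
    rw [show σ₂⁻¹ * (σ₁ * σ₂ * σ₁) = σ₂⁻¹ * (σ₂ * σ₁ * σ₂) from by rw [← hb]]
    group
  have e2 : (σ₁ * σ₂ * σ₁) * σ₂ = σ₁ * (σ₁ * σ₂ * σ₁) := by
    rw [show (σ₁ * σ₂ * σ₁) * σ₂ = σ₁ * (σ₂ * σ₁ * σ₂) from by group, ← hb, mul_assoc]
  have e3 : (σ₂ * σ₁) * σ₂ = σ₁ * (σ₂ * σ₁) := by
    rw [show (σ₂ * σ₁) * σ₂ = σ₂ * σ₁ * σ₂ from by group, ← hb]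
    group
  have f2 := swap_pow e2  -- D * σ₂^n = σ₁^n * D
  have f3 := swap_pow e3  -- (σ₂σ₁) * σ₂^n = σ₁^n * (σ₂σ₁)
  have g3 : ∀ n : ℕ, σ₂⁻¹ * (σ₁ ^ n * (σ₂ * σ₁)) = σ₁ * σ₂ ^ n := by
    intro n
    rw [← f3 n]
    group
  have hDD : (σ₁ * σ₂) ^ 3 = (σ₁ * σ₂ * σ₁) * (σ₁ * σ₂ * σ₁) := by
    rw [show (σ₁ * σ₂) ^ 3 = σ₁ * σ₂ * ((σ₁ * σ₂) * (σ₁ * σ₂)) from by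
      rw [pow_succ, pow_succ, pow_one, mul_assoc],
      show σ₁ * σ₂ * ((σ₁ * σ₂) * (σ₁ * σ₂)) = σ₁ * σ₂ * σ₁ * (σ₂ * σ₁ * σ₂) from by
      simp [mul_assoc], ← hb]
  have hL : σ₁ ^ (P + 1) * (σ₁ * σ₂ * σ₁⁻¹) ^ (Q + 1) * σ₂ ^ (R + 1) =
      σ₁ ^ (P + 1) * σ₂⁻¹ * σ₁ ^ (Q + 1) * σ₂ ^ (R + 2) := by
    calc σ₁ ^ (P + 1) * (σ₁ * σ₂ * σ₁⁻¹) ^ (Q + 1) * σ₂ ^ (R + 1)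
        = σ₁ ^ (P + 1) * (σ₁ * σ₂ ^ (Q + 1) * σ₁⁻¹) * σ₂ ^ (R + 1) := by rw [conj_pow]
      _ = σ₁ ^ (P + 1) * (σ₂⁻¹ * (σ₁ ^ (Q + 1) * (σ₂ * σ₁)) * σ₁⁻¹) * σ₂ ^ (R + 1) := by
          rw [g3 (Q + 1)]
      _ = σ₁ ^ (P + 1) * σ₂⁻¹ * σ₁ ^ (Q + 1) * σ₂ ^ (R + 2) := by group
  have hR : σ₂⁻¹ * ((σ₁ * σ₂) ^ 3 * σ₁⁻¹ * σ₂ ^ P * σ₁⁻¹ * σ₂ ^ Q * σ₁⁻¹ * σ₂ ^ R) * σ₂ =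
      σ₁ ^ (P + 1) * σ₂⁻¹ * σ₁ ^ (Q + 1) * σ₂ ^ (R + 2) := by
    calc σ₂⁻¹ * ((σ₁ * σ₂) ^ 3 * σ₁⁻¹ * σ₂ ^ P * σ₁⁻¹ * σ₂ ^ Q * σ₁⁻¹ * σ₂ ^ R) * σ₂
        = σ₂⁻¹ * ((σ₁ * σ₂ * σ₁) * ((σ₁ * σ₂ * σ₁) * σ₁⁻¹) * σ₂ ^ P * σ₁⁻¹ * σ₂ ^ Q *
            σ₁⁻¹ * σ₂ ^ R) * σ₂ := by rw [hDD]; group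
      _ = σ₂⁻¹ * ((σ₁ * σ₂ * σ₁) * σ₂⁻¹ * ((σ₁ * σ₂ * σ₁) * σ₂ ^ P) * σ₁⁻¹ * σ₂ ^ Q *
            σ₁⁻¹ * σ₂ ^ R) * σ₂ := by rw [e1i]; group
      _ = σ₂⁻¹ * ((σ₁ * σ₂ * σ₁) * σ₂⁻¹ * σ₁ ^ P * ((σ₁ * σ₂ * σ₁) * σ₁⁻¹) * σ₂ ^ Q *
            σ₁⁻¹ * σ₂ ^ R) * σ₂ := by rw [f2 P]; group
      _ = σ₂⁻¹ * ((σ₁ * σ₂ * σ₁) * σ₂⁻¹ * σ₁ ^ P * σ₂⁻¹ * ((σ₁ * σ₂ * σ₁) * σ₂ ^ Q) *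
            σ₁⁻¹ * σ₂ ^ R) * σ₂ := by rw [e1i]; group
      _ = σ₂⁻¹ * ((σ₁ * σ₂ * σ₁) * σ₂⁻¹ * σ₁ ^ P * σ₂⁻¹ * σ₁ ^ Q * ((σ₁ * σ₂ * σ₁) * σ₁⁻¹)
            * σ₂ ^ R) * σ₂ := by rw [f2 Q]; group
      _ = σ₂⁻¹ * ((σ₁ * σ₂ * σ₁) * σ₂⁻¹ * σ₁ ^ P * σ₂⁻¹ * σ₁ ^ Q * σ₂⁻¹ *
            ((σ₁ * σ₂ * σ₁) * σ₂ ^ R)) * σ₂ := by rw [e1i]; group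
      _ = σ₂⁻¹ * ((σ₁ * σ₂ * σ₁) * σ₂⁻¹ * σ₁ ^ P * σ₂⁻¹ * σ₁ ^ Q * σ₂⁻¹ *
            (σ₁ ^ R * (σ₁ * σ₂ * σ₁))) * σ₂ := by rw [f2 R]
      _ = σ₁ ^ (P + 1) * σ₂⁻¹ * (σ₁ ^ Q * (σ₂⁻¹ * (σ₁ ^ R * (σ₂ * σ₁)))) * (σ₂ * σ₂) := by
          rw [hb]; group
      _ = σ₁ ^ (P + 1) * σ₂⁻¹ * (σ₁ ^ Q * (σ₁ * σ₂ ^ R)) * (σ₂ * σ₂) := by rw [g3 R]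
      _ = σ₁ ^ (P + 1) * σ₂⁻¹ * σ₁ ^ (Q + 1) * σ₂ ^ (R + 2) := by group
  rw [hL, hR]
end

section
/- Let r ≥ 0 and s ≥ 1 be integers, and let p₁, …, p_s, q₁, …, q_s, r₁, …, r_s be integers, each ≥ 1. Then δ₃^{3r} · ∏_{i=1}^{s} (σ₁^{p_i} a₁₃^{q_i} σ₂^{r_i}) is conjugate to δ₃^{3(r+s)} · ∏_{i=1}^{s} (σ₁⁻¹ σ₂^{p_i − 1} σ₁⁻¹ σ₂^{q_i − 1} σ₁⁻¹ σ₂^{r_i − 1}), where both products are taken in order of increasing i. -/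
/-- Murasugi normal form, case `k = 3r`:
`δ₃^{3r} ∏_{i=1}^{s} σ₁^{p_i} a₁₃^{q_i} σ₂^{r_i}` is conjugate to
`δ₃^{3(r+s)} ∏_{i=1}^{s} σ₁⁻¹ σ₂^{p_i-1} σ₁⁻¹ σ₂^{q_i-1} σ₁⁻¹ σ₂^{r_i-1}`. -/
theorem murasugi_normal_form_k0 {G : Type*} [Group G] (σ₁ σ₂ : G)
    (hb : σ₁ * σ₂ * σ₁ = σ₂ * σ₁ * σ₂) (δ a : G)
    (hδ : δ = σ₁ * σ₂) (ha : a = σ₁ * σ₂ * σ₁⁻¹)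
    (r s : ℕ) (hs : 1 ≤ s) (p q t : ℕ → ℕ)
    (hp : ∀ i < s, 1 ≤ p i) (hq : ∀ i < s, 1 ≤ q i) (ht : ∀ i < s, 1 ≤ t i) :
    IsConj
      (δ ^ (3 * r) *
        ((List.range s).map (fun i => σ₁ ^ p i * a ^ q i * σ₂ ^ t i)).prod)
      (δ ^ (3 * (r + s)) *
        ((List.range s).map (fun i =>
          σ₁⁻¹ * σ₂ ^ (p i - 1) * σ₁⁻¹ * σ₂ ^ (q i - 1) * σ₁⁻¹ *
            σ₂ ^ (t i - 1))).prod) := by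
  -- basic relations
  have ha2 : σ₂ * a = σ₁ * σ₂ := by
    rw [ha]
    calc σ₂ * (σ₁ * σ₂ * σ₁⁻¹) = (σ₂ * σ₁ * σ₂) * σ₁⁻¹ := by group
    _ = (σ₁ * σ₂ * σ₁) * σ₁⁻¹ := by rw [hb]
    _ = σ₁ * σ₂ := by group
  have s1 : SemiconjBy δ σ₁ σ₂ := by
    show δ * σ₁ = σ₂ * δ
    rw [hδ]; rw [hb]; group
  have s2 : SemiconjBy δ σ₂ a := by
    show δ * σ₂ = a * δ
    rw [hδ, ha]; group
  have s3 : SemiconjBy δ a σ₁ := by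
    show δ * a = σ₁ * δ
    calc δ * a = σ₁ * (σ₂ * a) := by rw [hδ]; group
    _ = σ₁ * (σ₁ * σ₂) := by rw [ha2]
    _ = σ₁ * δ := by rw [hδ]
  -- moving δ⁻¹ to the right
  have i1 : SemiconjBy δ⁻¹ σ₂ σ₁ := s1.inv_symm_left
  have i2 : SemiconjBy δ⁻¹ σ₁ a := s3.inv_symm_left
  have i3 : SemiconjBy δ⁻¹ a σ₂ := s2.inv_symm_left
  have mv : ∀ (g x y : G), g * x = y * g → ∀ z, g * (x * z) = y * (g * z) := by
    intro g x y h z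
    rw [← mul_assoc, h, mul_assoc]
  have A1 : ∀ (n : ℕ) (z : G), δ⁻¹ * (σ₂ ^ n * z) = σ₁ ^ n * (δ⁻¹ * z) :=
    fun n => mv _ _ _ (i1.pow_right n)
  have A1' : ∀ (n : ℕ), δ⁻¹ * σ₂ ^ n = σ₁ ^ n * δ⁻¹ := fun n => (i1.pow_right n)
  have B1 : ∀ z : G, δ⁻¹ * (σ₂ * z) = σ₁ * (δ⁻¹ * z) := mv _ _ _ i1
  have B1' : δ⁻¹ * σ₂ = σ₁ * δ⁻¹ := i1
  have A2 : ∀ (n : ℕ) (z : G), δ⁻¹ * (σ₁ ^ n * z) = a ^ n * (δ⁻¹ * z) :=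
    fun n => mv _ _ _ (i2.pow_right n)
  have A2' : ∀ (n : ℕ), δ⁻¹ * σ₁ ^ n = a ^ n * δ⁻¹ := fun n => (i2.pow_right n)
  have B2 : ∀ z : G, δ⁻¹ * (σ₁ * z) = a * (δ⁻¹ * z) := mv _ _ _ i2
  have B2' : δ⁻¹ * σ₁ = a * δ⁻¹ := i2
  have A3 : ∀ (n : ℕ) (z : G), δ⁻¹ * (a ^ n * z) = σ₂ ^ n * (δ⁻¹ * z) :=
    fun n => mv _ _ _ (i3.pow_right n)
  have A3' : ∀ (n : ℕ), δ⁻¹ * a ^ n = σ₂ ^ n * δ⁻¹ := fun n => (i3.pow_right n)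
  have B3 : ∀ z : G, δ⁻¹ * (a * z) = σ₂ * (δ⁻¹ * z) := mv _ _ _ i3
  have B3' : δ⁻¹ * a = σ₂ * δ⁻¹ := i3
  -- δ^3 is central (semiconjugates everything to itself)
  have e3 : δ ^ 3 = δ * (δ * δ) := by
    rw [show (3 : ℕ) = 1 + 1 + 1 from rfl, pow_succ, pow_succ, pow_one, mul_assoc]
  have c1 : Commute (δ ^ 3) σ₁ := by
    rw [e3]; exact s3.mul_left (s2.mul_left s1)
  have c2 : Commute (δ ^ 3) σ₂ := by
    rw [e3]; exact s1.mul_left (s3.mul_left s2)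
  have c3 : Commute (δ ^ 3) a := by
    rw [e3]; exact s2.mul_left (s1.mul_left s3)
  have D0 : ∀ z : G, δ ^ 3 * (σ₂ * z) = σ₂ * (δ ^ 3 * z) := mv _ _ _ c2.eq
  have D0' : ∀ z : G, δ ^ 3 * (σ₁ * z) = σ₁ * (δ ^ 3 * z) := mv _ _ _ c1.eq
  have D0'' : ∀ z : G, δ ^ 3 * (a * z) = a * (δ ^ 3 * z) := mv _ _ _ c3.eq
  have D1 : ∀ (n : ℕ) (z : G), δ ^ 3 * (σ₁ ^ n * z) = σ₁ ^ n * (δ ^ 3 * z) :=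
    fun n => mv _ _ _ (c1.pow_right n).eq
  have D2 : ∀ (n : ℕ) (z : G), δ ^ 3 * (a ^ n * z) = a ^ n * (δ ^ 3 * z) :=
    fun n => mv _ _ _ (c3.pow_right n).eq
  have D3 : ∀ (n : ℕ) (z : G), δ ^ 3 * (σ₂ ^ n * z) = σ₂ ^ n * (δ ^ 3 * z) :=
    fun n => mv _ _ _ (c2.pow_right n).eq
  have Z' : δ ^ 3 * (δ⁻¹ * (δ⁻¹ * δ⁻¹)) = 1 := by group
  have e1 : σ₁⁻¹ = σ₂ * δ⁻¹ := by rw [hδ]; group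
  -- the key per-factor identity
  have factor : ∀ pi qi ti : ℕ, 1 ≤ pi → 1 ≤ qi → 1 ≤ ti →
      σ₂ * (σ₁ ^ pi * a ^ qi * σ₂ ^ ti) * σ₂⁻¹ =
        δ ^ 3 * (σ₁⁻¹ * σ₂ ^ (pi - 1) * σ₁⁻¹ * σ₂ ^ (qi - 1) * σ₁⁻¹ * σ₂ ^ (ti - 1)) := by
    intro pi qi ti hpi hqi hti
    obtain ⟨p', rfl⟩ : ∃ n, pi = n + 1 := ⟨pi - 1, (Nat.succ_pred_eq_of_pos hpi).symm⟩
    obtain ⟨q', rfl⟩ : ∃ n, qi = n + 1 := ⟨qi - 1, (Nat.succ_pred_eq_of_pos hqi).symm⟩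
    obtain ⟨t', rfl⟩ : ∃ n, ti = n + 1 := ⟨ti - 1, (Nat.succ_pred_eq_of_pos hti).symm⟩
    simp only [Nat.add_sub_cancel]
    rw [mul_inv_eq_iff_eq_mul]
    rw [pow_succ σ₁ p', pow_succ a q', pow_succ σ₂ t']
    simp only [e1, mul_assoc, A1, A1', B1, B1', A2, A2', B2, B2', A3, A3', B3, B3',
      D0, D0', D0'', D1, D2, D3, Z', mul_one]
  -- the product identity, by induction
  have key : ∀ n : ℕ, (∀ i < n, 1 ≤ p i) → (∀ i < n, 1 ≤ q i) → (∀ i < n, 1 ≤ t i) →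
      σ₂ * ((List.range n).map (fun i => σ₁ ^ p i * a ^ q i * σ₂ ^ t i)).prod * σ₂⁻¹ =
        (δ ^ 3) ^ n * ((List.range n).map (fun i =>
          σ₁⁻¹ * σ₂ ^ (p i - 1) * σ₁⁻¹ * σ₂ ^ (q i - 1) * σ₁⁻¹ * σ₂ ^ (t i - 1))).prod := by
    intro n
    induction n with
    | zero => intro _ _ _; simp
    | succ m ih =>
      intro hp' hq' ht'
      have hQ : Commute (δ ^ 3)
          (((List.range m).map (fun i =>
            σ₁⁻¹ * σ₂ ^ (p i - 1) * σ₁⁻¹ * σ₂ ^ (q i - 1) * σ₁⁻¹ * σ₂ ^ (t i - 1))).prod) := by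
        apply Commute.list_prod_right
        intro x hx
        simp only [List.mem_map, List.mem_range] at hx
        obtain ⟨i, _, rfl⟩ := hx
        exact (((((c1.inv_right.mul_right (c2.pow_right _)).mul_right
          c1.inv_right).mul_right (c2.pow_right _)).mul_right
          c1.inv_right).mul_right (c2.pow_right _))
      rw [List.range_succ, List.map_append, List.prod_append, List.map_append,
        List.prod_append, List.map_cons, List.map_nil, List.prod_cons, List.prod_nil, mul_one,
        List.map_cons, List.map_nil, List.prod_cons, List.prod_nil, mul_one]
      have hih := ih (fun i hi => hp' i (Nat.lt_succ_of_lt hi))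
        (fun i hi => hq' i (Nat.lt_succ_of_lt hi)) (fun i hi => ht' i (Nat.lt_succ_of_lt hi))
      have hfac := factor (p m) (q m) (t m) (hp' m (Nat.lt_succ_self m))
        (hq' m (Nat.lt_succ_self m)) (ht' m (Nat.lt_succ_self m))
      calc σ₂ * (((List.range m).map (fun i => σ₁ ^ p i * a ^ q i * σ₂ ^ t i)).prod *
            (σ₁ ^ p m * a ^ q m * σ₂ ^ t m)) * σ₂⁻¹
          = (σ₂ * ((List.range m).map (fun i => σ₁ ^ p i * a ^ q i * σ₂ ^ t i)).prod * σ₂⁻¹) *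
            (σ₂ * (σ₁ ^ p m * a ^ q m * σ₂ ^ t m) * σ₂⁻¹) := by group
        _ = ((δ ^ 3) ^ m * ((List.range m).map (fun i =>
              σ₁⁻¹ * σ₂ ^ (p i - 1) * σ₁⁻¹ * σ₂ ^ (q i - 1) * σ₁⁻¹ * σ₂ ^ (t i - 1))).prod) *
            (δ ^ 3 * (σ₁⁻¹ * σ₂ ^ (p m - 1) * σ₁⁻¹ * σ₂ ^ (q m - 1) * σ₁⁻¹ * σ₂ ^ (t m - 1))) := by
            rw [hih, hfac]
        _ = (δ ^ 3) ^ (m + 1) * (((List.range m).map (fun i =>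
              σ₁⁻¹ * σ₂ ^ (p i - 1) * σ₁⁻¹ * σ₂ ^ (q i - 1) * σ₁⁻¹ * σ₂ ^ (t i - 1))).prod *
            (σ₁⁻¹ * σ₂ ^ (p m - 1) * σ₁⁻¹ * σ₂ ^ (q m - 1) * σ₁⁻¹ * σ₂ ^ (t m - 1))) := by
            have swap : ∀ x y z w : G, z * y = y * z → (x * y) * (z * w) = (x * z) * (y * w) := by
              intro x y z w h
              calc (x * y) * (z * w) = x * ((y * z) * w) := by group
              _ = x * ((z * y) * w) := by rw [← h]
              _ = (x * z) * (y * w) := by group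
            rw [pow_succ (δ ^ 3) m]
            exact swap _ _ _ _ hQ.eq
  -- assemble
  rw [isConj_iff]
  refine ⟨σ₂, ?_⟩
  have hr : Commute σ₂ (δ ^ (3 * r)) := by
    rw [pow_mul]; exact (c2.symm.pow_right r)
  calc σ₂ * (δ ^ (3 * r) *
        ((List.range s).map (fun i => σ₁ ^ p i * a ^ q i * σ₂ ^ t i)).prod) * σ₂⁻¹
      = δ ^ (3 * r) *
        (σ₂ * ((List.range s).map (fun i => σ₁ ^ p i * a ^ q i * σ₂ ^ t i)).prod * σ₂⁻¹) := by
        rw [← mul_assoc, ← mul_assoc, hr.eq]; group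
    _ = δ ^ (3 * r) * ((δ ^ 3) ^ s * ((List.range s).map (fun i =>
          σ₁⁻¹ * σ₂ ^ (p i - 1) * σ₁⁻¹ * σ₂ ^ (q i - 1) * σ₁⁻¹ * σ₂ ^ (t i - 1))).prod) := by
        rw [key s hp hq ht]
    _ = δ ^ (3 * (r + s)) * ((List.range s).map (fun i =>
          σ₁⁻¹ * σ₂ ^ (p i - 1) * σ₁⁻¹ * σ₂ ^ (q i - 1) * σ₁⁻¹ * σ₂ ^ (t i - 1))).prod := by
        rw [← pow_mul, ← mul_assoc, ← pow_add, Nat.mul_add]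
end

section
/- Let r ≥ 0 and s ≥ 1 be integers, and let p₁, …, p_{s+1}, q₁, …, q_{s+1}, r₁, …, r_s be integers, each ≥ 1. Then δ₃^{3r+1} · (∏_{i=1}^{s} σ₁^{p_i} a₁₃^{q_i} σ₂^{r_i}) · σ₁^{p_{s+1}} a₁₃^{q_{s+1}} is conjugate to δ₃^{3(r+s+1)} · (∏_{i=1}^{s} σ₁⁻¹ σ₂^{p_i − 1} σ₁⁻¹ σ₂^{q_i − 1} σ₁⁻¹ σ₂^{r_i − 1}) · σ₁⁻¹ σ₂^{p_{s+1} − 1} σ₁⁻¹ σ₂^{q_{s+1} − 1}, where both products are taken in order of increasing i. -/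
/-- Murasugi normal form, case `k = 3r + 1`:
`δ₃^{3r+1} (∏_{i=1}^{s} σ₁^{p_i} a₁₃^{q_i} σ₂^{r_i}) σ₁^{p_{s+1}} a₁₃^{q_{s+1}}`
is conjugate to
`δ₃^{3(r+s+1)} (∏_{i=1}^{s} σ₁⁻¹ σ₂^{p_i-1} σ₁⁻¹ σ₂^{q_i-1} σ₁⁻¹ σ₂^{r_i-1})
  σ₁⁻¹ σ₂^{p_{s+1}-1} σ₁⁻¹ σ₂^{q_{s+1}-1}`. -/
theorem murasugi_normal_form_k1 {G : Type*} [Group G] (σ₁ σ₂ : G)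
    (hb : σ₁ * σ₂ * σ₁ = σ₂ * σ₁ * σ₂) (δ a : G)
    (hδ : δ = σ₁ * σ₂) (ha : a = σ₁ * σ₂ * σ₁⁻¹)
    (r s : ℕ) (hs : 1 ≤ s) (p q t : ℕ → ℕ)
    (hp : ∀ i < s + 1, 1 ≤ p i) (hq : ∀ i < s + 1, 1 ≤ q i)
    (ht : ∀ i < s, 1 ≤ t i) :
    IsConj
      (δ ^ (3 * r + 1) *
        ((List.range s).map (fun i => σ₁ ^ p i * a ^ q i * σ₂ ^ t i)).prod *
          σ₁ ^ p s * a ^ q s)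
      (δ ^ (3 * (r + s + 1)) *
        ((List.range s).map (fun i =>
          σ₁⁻¹ * σ₂ ^ (p i - 1) * σ₁⁻¹ * σ₂ ^ (q i - 1) * σ₁⁻¹ *
            σ₂ ^ (t i - 1))).prod *
          (σ₁⁻¹ * σ₂ ^ (p s - 1) * σ₁⁻¹ * σ₂ ^ (q s - 1))) := by
  -- basic conjugation moves
  have h1 : δ * σ₁ = σ₂ * δ := by rw [hδ, hb, mul_assoc]
  have h2 : δ * σ₂ = a * δ := by rw [hδ, ha]; group
  have h3 : δ * a = σ₁ * δ := by
    rw [hδ, ha]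
    calc σ₁ * σ₂ * (σ₁ * σ₂ * σ₁⁻¹) = σ₁ * (σ₂ * σ₁ * σ₂) * σ₁⁻¹ := by group
      _ = σ₁ * (σ₁ * σ₂ * σ₁) * σ₁⁻¹ := by rw [hb]
      _ = σ₁ * (σ₁ * σ₂) := by group
  have hi0 : δ * σ₁⁻¹ = a := by rw [hδ, ha]
  have hda : δ = a * σ₁ := by rw [hδ, ha]; group
  have L1 : ∀ x : G, δ * (σ₁ * x) = σ₂ * (δ * x) := fun x => by
    rw [← mul_assoc, h1, mul_assoc]
  have L2 : ∀ x : G, δ * (σ₂ * x) = a * (δ * x) := fun x => by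
    rw [← mul_assoc, h2, mul_assoc]
  have L3 : ∀ x : G, δ * (a * x) = σ₁ * (δ * x) := fun x => by
    rw [← mul_assoc, h3, mul_assoc]
  have Li : ∀ x : G, δ * (σ₁⁻¹ * x) = a * x := fun x => by
    rw [← mul_assoc, hi0]
  have h2n : ∀ n : ℕ, δ * σ₂ ^ n = a ^ n * δ :=
    fun n => (SemiconjBy.pow_right (h2 : SemiconjBy δ σ₂ a) n)
  have h3n : ∀ n : ℕ, δ * a ^ n = σ₁ ^ n * δ :=
    fun n => (SemiconjBy.pow_right (h3 : SemiconjBy δ a σ₁) n)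
  have L2' : ∀ (n : ℕ) (x : G), δ * (σ₂ ^ n * x) = a ^ n * (δ * x) := fun n x => by
    rw [← mul_assoc, h2n n, mul_assoc]
  have L3' : ∀ (n : ℕ) (x : G), δ * (a ^ n * x) = σ₁ ^ n * (δ * x) := fun n x => by
    rw [← mul_assoc, h3n n, mul_assoc]
  -- the key block identity
  have block : ∀ p' q' t' : ℕ,
      δ ^ 3 * (σ₁⁻¹ * σ₂ ^ p' * σ₁⁻¹ * σ₂ ^ q' * σ₁⁻¹ * σ₂ ^ t')
        = σ₂ * (σ₁ ^ (p' + 1) * a ^ (q' + 1) * σ₂ ^ (t' + 1)) * σ₂⁻¹ := by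
    intro p' q' t'
    have e0 : δ ^ 3 * (σ₁⁻¹ * σ₂ ^ p' * σ₁⁻¹ * σ₂ ^ q' * σ₁⁻¹ * σ₂ ^ t')
        = δ * (δ * (δ * (σ₁⁻¹ * (σ₂ ^ p' * (σ₁⁻¹ * (σ₂ ^ q' * (σ₁⁻¹ * σ₂ ^ t'))))))) := by
      rw [pow_succ, pow_succ, pow_one]; simp [mul_assoc]
    rw [e0, Li, L3, L2' p', Li, L1, L3' p', L3, L2' q', Li]
    group
  -- the key tail identity
  have tail : ∀ p' q' : ℕ,
      δ ^ 3 * (σ₁⁻¹ * σ₂ ^ p' * σ₁⁻¹ * σ₂ ^ q')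
        = σ₂ * (σ₁ ^ (p' + 1) * a ^ (q' + 1)) * σ₁ := by
    intro p' q'
    have e0 : δ ^ 3 * (σ₁⁻¹ * σ₂ ^ p' * σ₁⁻¹ * σ₂ ^ q')
        = δ * (δ * (δ * (σ₁⁻¹ * (σ₂ ^ p' * (σ₁⁻¹ * σ₂ ^ q'))))) := by
      rw [pow_succ, pow_succ, pow_one]; simp [mul_assoc]
    rw [e0, Li, L3, L2' p', Li, L1, L3' p', L3, h2n q']
    rw [show (σ₂ * (σ₁ ^ p' * (σ₁ * (a ^ q' * δ))) : G)
        = σ₂ * (σ₁ ^ p' * (σ₁ * (a ^ q' * (a * σ₁)))) from by rw [← hda]]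
    group
  -- centrality of δ^3
  have hc1 : Commute (δ ^ 3) σ₁ := by
    show δ ^ 3 * σ₁ = σ₁ * δ ^ 3
    have e0 : δ ^ 3 * σ₁ = δ * (δ * (δ * (σ₁ * 1))) := by
      rw [pow_succ, pow_succ, pow_one]; simp [mul_assoc]
    rw [e0, L1, L2, L3]
    rw [pow_succ, pow_succ, pow_one]; simp [mul_assoc]
  have hc2 : Commute (δ ^ 3) σ₂ := by
    show δ ^ 3 * σ₂ = σ₂ * δ ^ 3
    have e0 : δ ^ 3 * σ₂ = δ * (δ * (δ * (σ₂ * 1))) := by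
      rw [pow_succ, pow_succ, pow_one]; simp [mul_assoc]
    rw [e0, L2, L3, L1]
    rw [pow_succ, pow_succ, pow_one]; simp [mul_assoc]
  have hcg : ∀ i : ℕ, Commute (δ ^ 3)
      (σ₁⁻¹ * σ₂ ^ (p i - 1) * σ₁⁻¹ * σ₂ ^ (q i - 1) * σ₁⁻¹ * σ₂ ^ (t i - 1)) := by
    intro i
    exact (((((hc1.inv_right.mul_right (hc2.pow_right _)).mul_right
      hc1.inv_right).mul_right (hc2.pow_right _)).mul_right
      hc1.inv_right).mul_right (hc2.pow_right _))
  -- blocks rewritten with subtraction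
  have hblock : ∀ i : ℕ, 1 ≤ p i → 1 ≤ q i → 1 ≤ t i →
      σ₂ * (σ₁ ^ p i * a ^ q i * σ₂ ^ t i) * σ₂⁻¹
        = δ ^ 3 * (σ₁⁻¹ * σ₂ ^ (p i - 1) * σ₁⁻¹ * σ₂ ^ (q i - 1) * σ₁⁻¹ * σ₂ ^ (t i - 1)) := by
    intro i h1' h2' h3'
    have := block (p i - 1) (q i - 1) (t i - 1)
    rw [Nat.sub_add_cancel h1', Nat.sub_add_cancel h2', Nat.sub_add_cancel h3'] at this
    exact this.symm
  -- list lemma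
  have listlem : ∀ l : List ℕ, (∀ i ∈ l, 1 ≤ p i ∧ 1 ≤ q i ∧ 1 ≤ t i) →
      σ₂ * ((l.map (fun i => σ₁ ^ p i * a ^ q i * σ₂ ^ t i)).prod) * σ₂⁻¹
        = δ ^ (3 * l.length) *
          ((l.map (fun i => σ₁⁻¹ * σ₂ ^ (p i - 1) * σ₁⁻¹ * σ₂ ^ (q i - 1) * σ₁⁻¹ *
            σ₂ ^ (t i - 1))).prod) := by
    intro l
    induction l with
    | nil => intro _; simp
    | cons i l ih =>
      intro h
      obtain ⟨hpi, hqi, hti⟩ := h i (by simp)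
      have ih' := ih (fun j hj => h j (by simp [hj]))
      simp only [List.map_cons, List.prod_cons, List.length_cons]
      set gi : G := σ₁⁻¹ * σ₂ ^ (p i - 1) * σ₁⁻¹ * σ₂ ^ (q i - 1) * σ₁⁻¹ * σ₂ ^ (t i - 1)
        with hgi
      set P : G := ((l.map (fun i => σ₁⁻¹ * σ₂ ^ (p i - 1) * σ₁⁻¹ * σ₂ ^ (q i - 1) * σ₁⁻¹ *
            σ₂ ^ (t i - 1))).prod) with hP
      set B : G := ((l.map (fun i => σ₁ ^ p i * a ^ q i * σ₂ ^ t i)).prod) with hB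
      have hcomm : gi * δ ^ (3 * l.length) = δ ^ (3 * l.length) * gi := by
        rw [pow_mul]
        exact (((hcg i).pow_left l.length).symm)
      calc σ₂ * (σ₁ ^ p i * a ^ q i * σ₂ ^ t i * B) * σ₂⁻¹
          = (σ₂ * (σ₁ ^ p i * a ^ q i * σ₂ ^ t i) * σ₂⁻¹) * (σ₂ * B * σ₂⁻¹) := by group
        _ = (δ ^ 3 * gi) * (δ ^ (3 * l.length) * P) := by rw [hblock i hpi hqi hti, ih']
        _ = δ ^ 3 * (gi * δ ^ (3 * l.length)) * P := by group
        _ = δ ^ 3 * (δ ^ (3 * l.length) * gi) * P := by rw [hcomm]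
        _ = δ ^ (3 * (l.length + 1)) * (gi * P) := by
            rw [show 3 * (l.length + 1) = 3 + 3 * l.length from by ring, pow_add]
            group
  -- assemble
  rw [isConj_iff]
  refine ⟨σ₁⁻¹, ?_⟩
  rw [inv_inv]
  have hB := listlem (List.range s) (fun i hi => by
    have his : i < s := List.mem_range.mp hi
    exact ⟨hp i (Nat.lt_succ_of_lt his), hq i (Nat.lt_succ_of_lt his), ht i his⟩)
  rw [List.length_range] at hB
  have hE : σ₂ * (σ₁ ^ p s * a ^ q s) * σ₁
      = δ ^ 3 * (σ₁⁻¹ * σ₂ ^ (p s - 1) * σ₁⁻¹ * σ₂ ^ (q s - 1)) := by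
    have := tail (p s - 1) (q s - 1)
    rw [Nat.sub_add_cancel (hp s (Nat.lt_succ_self s)),
      Nat.sub_add_cancel (hq s (Nat.lt_succ_self s))] at this
    exact this.symm
  have hσδ : σ₁⁻¹ * δ ^ (3 * r + 1) = δ ^ (3 * r) * σ₂ := by
    have hcom : σ₁⁻¹ * δ ^ (3 * r) = δ ^ (3 * r) * σ₁⁻¹ := by
      rw [pow_mul]
      exact ((hc1.inv_right.pow_left r).symm)
    have hd1 : σ₁⁻¹ * δ = σ₂ := by rw [hδ]; group
    calc σ₁⁻¹ * δ ^ (3 * r + 1) = (σ₁⁻¹ * δ ^ (3 * r)) * δ := by rw [pow_succ]; group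
      _ = δ ^ (3 * r) * (σ₁⁻¹ * δ) := by rw [hcom]; group
      _ = δ ^ (3 * r) * σ₂ := by rw [hd1]
  set B : G := ((List.range s).map (fun i => σ₁ ^ p i * a ^ q i * σ₂ ^ t i)).prod with hBdef
  set P : G := ((List.range s).map (fun i =>
      σ₁⁻¹ * σ₂ ^ (p i - 1) * σ₁⁻¹ * σ₂ ^ (q i - 1) * σ₁⁻¹ * σ₂ ^ (t i - 1))).prod with hPdef
  have hcP : P * δ ^ 3 = δ ^ 3 * P := by
    refine (Commute.list_prod_right _ _ (fun y hy => ?_)).symm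
    obtain ⟨i, _, rfl⟩ := List.mem_map.mp hy
    exact hcg i
  calc σ₁⁻¹ * (δ ^ (3 * r + 1) * B * σ₁ ^ p s * a ^ q s) * σ₁
      = (σ₁⁻¹ * δ ^ (3 * r + 1)) * (B * (σ₁ ^ p s * a ^ q s * σ₁)) := by group
    _ = (δ ^ (3 * r) * σ₂) * (B * (σ₁ ^ p s * a ^ q s * σ₁)) := by rw [hσδ]
    _ = δ ^ (3 * r) * ((σ₂ * B * σ₂⁻¹) * (σ₂ * (σ₁ ^ p s * a ^ q s) * σ₁)) := by group
    _ = δ ^ (3 * r) * ((δ ^ (3 * s) * P) *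
        (δ ^ 3 * (σ₁⁻¹ * σ₂ ^ (p s - 1) * σ₁⁻¹ * σ₂ ^ (q s - 1)))) := by rw [hB, hE]
    _ = δ ^ (3 * r) * δ ^ (3 * s) * (P * δ ^ 3) *
        (σ₁⁻¹ * σ₂ ^ (p s - 1) * σ₁⁻¹ * σ₂ ^ (q s - 1)) := by group
    _ = δ ^ (3 * r) * δ ^ (3 * s) * (δ ^ 3 * P) *
        (σ₁⁻¹ * σ₂ ^ (p s - 1) * σ₁⁻¹ * σ₂ ^ (q s - 1)) := by rw [hcP]
    _ = δ ^ (3 * (r + s + 1)) * P *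
        (σ₁⁻¹ * σ₂ ^ (p s - 1) * σ₁⁻¹ * σ₂ ^ (q s - 1)) := by
        rw [show 3 * (r + s + 1) = 3 * r + 3 * s + 3 from by ring, pow_add, pow_add]
        group
end

section
/- Let r ≥ 0 and s ≥ 1 be integers, and let p₁, …, p_{s+1}, q₁, …, q_s, r₁, …, r_s be integers, each ≥ 1. Then δ₃^{3r+2} · (∏_{i=1}^{s} σ₁^{p_i} a₁₃^{q_i} σ₂^{r_i}) · σ₁^{p_{s+1}} is conjugate to δ₃^{3(r+s+1)} · (∏_{i=1}^{s} σ₁⁻¹ σ₂^{p_i − 1} σ₁⁻¹ σ₂^{q_i − 1} σ₁⁻¹ σ₂^{r_i − 1}) · σ₁⁻¹ σ₂^{p_{s+1} − 1}, where both products are taken in order of increasing i. -/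
private theorem murasugi_push {G : Type*} [Group G] {g u v : G}
    (h : SemiconjBy g u v) (x : G) : g * (u * x) = v * (g * x) := by
  rw [← mul_assoc, h.eq, mul_assoc]

private theorem murasugi_semiconj_list_prod {G : Type*} [Group G] (g : G) (f f' : ℕ → G) :
    ∀ l : List ℕ, (∀ i ∈ l, SemiconjBy g (f i) (f' i)) →
      SemiconjBy g (l.map f).prod (l.map f').prod
  | [], _ => by simpa using SemiconjBy.one_right g
  | i :: l, h => by
    simp only [List.map_cons, List.prod_cons]
    exact (h i List.mem_cons_self).mul_right
      (murasugi_semiconj_list_prod g f f' l fun j hj => h j (List.mem_cons_of_mem _ hj))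

/-- Murasugi normal form, case `k = 3r + 2`:
`δ₃^{3r+2} (∏_{i=1}^{s} σ₁^{p_i} a₁₃^{q_i} σ₂^{r_i}) σ₁^{p_{s+1}}`
is conjugate to
`δ₃^{3(r+s+1)} (∏_{i=1}^{s} σ₁⁻¹ σ₂^{p_i-1} σ₁⁻¹ σ₂^{q_i-1} σ₁⁻¹ σ₂^{r_i-1})
  σ₁⁻¹ σ₂^{p_{s+1}-1}`. -/
theorem murasugi_normal_form_k2 {G : Type*} [Group G] (σ₁ σ₂ : G)
    (hb : σ₁ * σ₂ * σ₁ = σ₂ * σ₁ * σ₂) (δ a : G)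
    (hδ : δ = σ₁ * σ₂) (ha : a = σ₁ * σ₂ * σ₁⁻¹)
    (r s : ℕ) (hs : 1 ≤ s) (p q t : ℕ → ℕ)
    (hp : ∀ i < s + 1, 1 ≤ p i) (hq : ∀ i < s, 1 ≤ q i)
    (ht : ∀ i < s, 1 ≤ t i) :
    IsConj
      (δ ^ (3 * r + 2) *
        ((List.range s).map (fun i => σ₁ ^ p i * a ^ q i * σ₂ ^ t i)).prod *
          σ₁ ^ p s)
      (δ ^ (3 * (r + s + 1)) *
        ((List.range s).map (fun i =>
          σ₁⁻¹ * σ₂ ^ (p i - 1) * σ₁⁻¹ * σ₂ ^ (q i - 1) * σ₁⁻¹ *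
            σ₂ ^ (t i - 1))).prod *
          (σ₁⁻¹ * σ₂ ^ (p s - 1))) := by
  -- Conjugation by δ cycles σ₁ ↦ σ₂ ↦ a ↦ σ₁.
  have s1 : SemiconjBy δ σ₁ σ₂ := by
    show δ * σ₁ = σ₂ * δ
    rw [hδ, hb, mul_assoc]
  have s2 : SemiconjBy δ σ₂ a := by
    show δ * σ₂ = a * δ
    rw [hδ, ha]; group
  have s3 : SemiconjBy δ a σ₁ := by
    show δ * a = σ₁ * δ
    rw [hδ, ha,
      show σ₁ * σ₂ * (σ₁ * σ₂ * σ₁⁻¹) = σ₁ * (σ₂ * σ₁ * σ₂ * σ₁⁻¹) from by group,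
      ← hb]
    group
  -- letter decompositions
  have e1 : δ * σ₂⁻¹ = σ₁ := by rw [hδ]; group
  have e2 : δ * σ₁⁻¹ = a := by rw [hδ, ha]
  have e3 : δ * a⁻¹ = σ₂ := by
    rw [hδ, ha, show σ₁ * σ₂ * (σ₁ * σ₂ * σ₁⁻¹)⁻¹ = σ₁ * σ₂ * σ₁ * σ₂⁻¹ * σ₁⁻¹ from by group,
      hb]
    group
  have hp1 : ∀ m : ℕ, σ₁ ^ (m + 1) = δ * (σ₂⁻¹ * σ₁ ^ m) := fun m => by
    rw [pow_succ', ← e1, mul_assoc]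
  have hp2 : ∀ m : ℕ, a ^ (m + 1) = δ * (σ₁⁻¹ * a ^ m) := fun m => by
    rw [pow_succ', ← e2, mul_assoc]
  have hp3 : ∀ m : ℕ, σ₂ ^ (m + 1) = δ * (a⁻¹ * σ₂ ^ m) := fun m => by
    rw [pow_succ', ← e3, mul_assoc]
  -- push rules for δ
  have mvp1 : ∀ (m : ℕ) (x : G), δ * (σ₁ ^ m * x) = σ₂ ^ m * (δ * x) :=
    fun m x => murasugi_push (s1.pow_right m) x
  have mvp2 : ∀ (m : ℕ) (x : G), δ * (σ₂ ^ m * x) = a ^ m * (δ * x) :=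
    fun m x => murasugi_push (s2.pow_right m) x
  have mvp3 : ∀ (m : ℕ) (x : G), δ * (a ^ m * x) = σ₁ ^ m * (δ * x) :=
    fun m x => murasugi_push (s3.pow_right m) x
  have mvi1 : ∀ x : G, δ * (σ₁⁻¹ * x) = σ₂⁻¹ * (δ * x) :=
    fun x => murasugi_push s1.inv_right x
  have mvi2 : ∀ x : G, δ * (σ₂⁻¹ * x) = a⁻¹ * (δ * x) :=
    fun x => murasugi_push s2.inv_right x
  have mvi3 : ∀ x : G, δ * (a⁻¹ * x) = σ₁⁻¹ * (δ * x) :=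
    fun x => murasugi_push s3.inv_right x
  have tvp1 : ∀ m : ℕ, δ * σ₁ ^ m = σ₂ ^ m * δ := fun m => (s1.pow_right m).eq
  have tvp2 : ∀ m : ℕ, δ * σ₂ ^ m = a ^ m * δ := fun m => (s2.pow_right m).eq
  have tvp3 : ∀ m : ℕ, δ * a ^ m = σ₁ ^ m * δ := fun m => (s3.pow_right m).eq
  have tvi1 : δ * σ₁⁻¹ = σ₂⁻¹ * δ := s1.inv_right.eq
  have tvi2 : δ * σ₂⁻¹ = a⁻¹ * δ := s2.inv_right.eq
  have tvi3 : δ * a⁻¹ = σ₁⁻¹ * δ := s3.inv_right.eq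
  -- δ³ commutes with the generators
  have c1 : Commute (δ ^ 3) σ₁ := by
    have h := s3.mul_left (s2.mul_left s1)
    rwa [show δ * (δ * δ) = δ ^ 3 from by rw [pow_succ, pow_succ, pow_one, mul_assoc]] at h
  have c2 : Commute (δ ^ 3) σ₂ := by
    have h := s1.mul_left (s3.mul_left s2)
    rwa [show δ * (δ * δ) = δ ^ 3 from by rw [pow_succ, pow_succ, pow_one, mul_assoc]] at h
  have c3 : Commute (δ ^ 3) a := by
    have h := s2.mul_left (s1.mul_left s3)
    rwa [show δ * (δ * δ) = δ ^ 3 from by rw [pow_succ, pow_succ, pow_one, mul_assoc]] at h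
  -- block functions
  set F : ℕ → G := fun i => σ₁ ^ p i * a ^ q i * σ₂ ^ t i with hF
  set C : ℕ → G := fun i =>
    a⁻¹ * σ₂ ^ (p i - 1) * a⁻¹ * σ₂ ^ (q i - 1) * a⁻¹ * σ₂ ^ (t i - 1) with hC
  set X : ℕ → G := fun i =>
    σ₂⁻¹ * σ₁ ^ (p i - 1) * σ₂⁻¹ * σ₁ ^ (q i - 1) * σ₂⁻¹ * σ₁ ^ (t i - 1) with hX
  set Z : ℕ → G := fun i =>
    σ₁⁻¹ * σ₂ ^ (p i - 1) * σ₁⁻¹ * σ₂ ^ (q i - 1) * σ₁⁻¹ * σ₂ ^ (t i - 1) with hZ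
  -- block lemma
  have hB : ∀ i < s, F i = δ ^ 3 * C i := by
    intro i hi
    obtain ⟨m1, hm1⟩ : ∃ m, p i = m + 1 := ⟨p i - 1, by have := hp i (by omega); omega⟩
    obtain ⟨m2, hm2⟩ : ∃ m, q i = m + 1 := ⟨q i - 1, by have := hq i hi; omega⟩
    obtain ⟨m3, hm3⟩ : ∃ m, t i = m + 1 := ⟨t i - 1, by have := ht i hi; omega⟩
    simp only [hF, hC, hm1, hm2, hm3, Nat.add_sub_cancel]
    rw [hp1 m1, hp2 m2, hp3 m3,
      show δ ^ 3 = δ * (δ * δ) from by rw [pow_succ, pow_succ, pow_one, mul_assoc]]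
    simp only [mul_assoc]
    simp only [mvp1, mvp2, mvp3, mvi1, mvi2, mvi3, tvp1, tvp2, tvp3, tvi1, tvi2, tvi3]
  -- commutation of δ³ with the C-blocks
  have cC : ∀ i ∈ List.range s, Commute (δ ^ 3) (C i) := by
    intro i _
    exact ((((c3.inv_right.mul_right (c2.pow_right _)).mul_right c3.inv_right).mul_right
      (c2.pow_right _)).mul_right c3.inv_right).mul_right (c2.pow_right _)
  have cCprod : Commute (δ ^ 3) (((List.range s).map C).prod) := by
    have h := murasugi_semiconj_list_prod (δ ^ 3) C C (List.range s) cC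
    exact h
  -- product lemma
  have hprod : ∀ n ≤ s,
      ((List.range n).map F).prod = δ ^ (3 * n) * ((List.range n).map C).prod := by
    intro n
    induction n with
    | zero => simp
    | succ k ih =>
      intro hk
      have hcp : Commute (δ ^ 3) (((List.range k).map C).prod) :=
        murasugi_semiconj_list_prod (δ ^ 3) C C (List.range k)
          (fun i hi => cC i (by simp only [List.mem_range] at *; omega))
      rw [List.range_succ, List.map_append, List.map_append, List.prod_append,
        List.prod_append, ih (by omega)]
      simp only [List.map_cons, List.map_nil, List.prod_cons, List.prod_nil, mul_one]
      rw [hB k (by omega)]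
      calc δ ^ (3 * k) * ((List.range k).map C).prod * (δ ^ 3 * C k)
          = δ ^ (3 * k) * (((List.range k).map C).prod * δ ^ 3) * C k := by
            simp only [mul_assoc]
        _ = δ ^ (3 * k) * (δ ^ 3 * ((List.range k).map C).prod) * C k := by
            rw [← hcp.eq]
        _ = δ ^ (3 * (k + 1)) * (((List.range k).map C).prod * C k) := by
            rw [show 3 * (k + 1) = 3 * k + 3 from by ring, pow_add]
            simp only [mul_assoc]
  -- semiconjugation δ · X = C · δ
  have scXC : ∀ i ∈ List.range s, SemiconjBy δ (X i) (C i) := by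
    intro i _
    exact ((((s2.inv_right.mul_right (s1.pow_right _)).mul_right s2.inv_right).mul_right
      (s1.pow_right _)).mul_right s2.inv_right).mul_right (s1.pow_right _)
  have scX : SemiconjBy δ (((List.range s).map X).prod) (((List.range s).map C).prod) :=
    murasugi_semiconj_list_prod δ X C (List.range s) scXC
  -- rewrite the left-hand side
  obtain ⟨m0, hm0⟩ : ∃ m, p s = m + 1 := ⟨p s - 1, by have := hp s (by omega); omega⟩
  have E1 : δ ^ (3 * r + 2) * ((List.range s).map F).prod * σ₁ ^ p s
      = δ ^ (3 * (r + s + 1)) * ((List.range s).map X).prod * (σ₂⁻¹ * σ₁ ^ (p s - 1)) := by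
    rw [hm0, Nat.add_sub_cancel, hp1 m0, hprod s le_rfl]
    calc δ ^ (3 * r + 2) * (δ ^ (3 * s) * ((List.range s).map C).prod) *
          (δ * (σ₂⁻¹ * σ₁ ^ m0))
        = δ ^ (3 * r + 2) * δ ^ (3 * s) * (((List.range s).map C).prod * δ) *
            (σ₂⁻¹ * σ₁ ^ m0) := by simp only [mul_assoc]
      _ = δ ^ (3 * r + 2) * δ ^ (3 * s) * (δ * ((List.range s).map X).prod) *
            (σ₂⁻¹ * σ₁ ^ m0) := by rw [← scX.eq]
      _ = δ ^ (3 * (r + s + 1)) * ((List.range s).map X).prod * (σ₂⁻¹ * σ₁ ^ m0) := by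
            conv_rhs => rw [show 3 * (r + s + 1) = 3 * r + 2 + 3 * s + 1 from by ring,
              pow_add, pow_add, pow_one]
            simp only [mul_assoc]
  -- the half twist Δ
  have hD1 : SemiconjBy (σ₁ * σ₂ * σ₁) σ₁ σ₂ := by
    show σ₁ * σ₂ * σ₁ * σ₁ = σ₂ * (σ₁ * σ₂ * σ₁)
    calc σ₁ * σ₂ * σ₁ * σ₁ = σ₂ * σ₁ * σ₂ * σ₁ := by rw [hb]
      _ = σ₂ * (σ₁ * σ₂ * σ₁) := by group
  have hD2 : SemiconjBy (σ₁ * σ₂ * σ₁) σ₂ σ₁ := by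
    show σ₁ * σ₂ * σ₁ * σ₂ = σ₁ * (σ₁ * σ₂ * σ₁)
    calc σ₁ * σ₂ * σ₁ * σ₂ = σ₁ * (σ₂ * σ₁ * σ₂) := by group
      _ = σ₁ * (σ₁ * σ₂ * σ₁) := by rw [hb]
  have cD : Commute (σ₁ * σ₂ * σ₁) (δ ^ (3 * (r + s + 1))) := by
    have h : Commute (δ ^ 3) (σ₁ * σ₂ * σ₁) := (c1.mul_right c2).mul_right c1
    have h2 : Commute (σ₁ * σ₂ * σ₁) ((δ ^ 3) ^ (r + s + 1)) :=
      (h.symm).pow_right (r + s + 1)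
    rwa [← pow_mul] at h2
  have scXZ : SemiconjBy (σ₁ * σ₂ * σ₁) (((List.range s).map X).prod)
      (((List.range s).map Z).prod) := by
    refine murasugi_semiconj_list_prod _ X Z (List.range s) (fun i _ => ?_)
    exact ((((hD2.inv_right.mul_right (hD1.pow_right _)).mul_right hD2.inv_right).mul_right
      (hD1.pow_right _)).mul_right hD2.inv_right).mul_right (hD1.pow_right _)
  have scTail : SemiconjBy (σ₁ * σ₂ * σ₁) (σ₂⁻¹ * σ₁ ^ (p s - 1)) (σ₁⁻¹ * σ₂ ^ (p s - 1)) :=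
    hD2.inv_right.mul_right (hD1.pow_right _)
  have key : SemiconjBy (σ₁ * σ₂ * σ₁)
      (δ ^ (3 * (r + s + 1)) * ((List.range s).map X).prod * (σ₂⁻¹ * σ₁ ^ (p s - 1)))
      (δ ^ (3 * (r + s + 1)) * ((List.range s).map Z).prod * (σ₁⁻¹ * σ₂ ^ (p s - 1))) :=
    (SemiconjBy.mul_right cD scXZ).mul_right scTail
  rw [isConj_iff]
  refine ⟨σ₁ * σ₂ * σ₁, ?_⟩
  rw [E1, key.eq, mul_inv_cancel_right]
end

section
/- For all integers p, q ≥ 1, the element δ₃ σ₁^p a₁₃^q is conjugate to σ₁^{q+1} σ₂^{p+1}. -/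
/-- For `p, q ≥ 1`, `δ₃ σ₁^p a₁₃^q` is conjugate to `σ₁^{q+1} σ₂^{p+1}`. -/
theorem delta_sigma_a_conj {G : Type*} [Group G] (σ₁ σ₂ : G)
    (hb : σ₁ * σ₂ * σ₁ = σ₂ * σ₁ * σ₂) (δ a : G)
    (hδ : δ = σ₁ * σ₂) (ha : a = σ₁ * σ₂ * σ₁⁻¹)
    (p q : ℕ) (hp : 1 ≤ p) (hq : 1 ≤ q) :
    IsConj (δ * σ₁ ^ p * a ^ q) (σ₁ ^ (q + 1) * σ₂ ^ (p + 1)) := by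
  set Δ := σ₁ * σ₂ * σ₁ with hΔ
  have h1 : Δ * σ₁ = σ₂ * Δ := by
    calc Δ * σ₁ = σ₂ * σ₁ * σ₂ * σ₁ := by rw [hb]
    _ = σ₂ * Δ := by rw [hΔ]; group
  have h2 : Δ * σ₂ = σ₁ * Δ := by
    calc Δ * σ₂ = σ₁ * (σ₂ * σ₁ * σ₂) := by rw [hΔ]; group
    _ = σ₁ * Δ := by rw [← hb]
  have h1n : ∀ n : ℕ, Δ * σ₁ ^ n = σ₂ ^ n * Δ := by
    intro n
    induction n with
    | zero => simp
    | succ k ih => rw [pow_succ, ← mul_assoc, ih, mul_assoc, h1, pow_succ]; group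
  have h2n : ∀ n : ℕ, Δ * σ₂ ^ n = σ₁ ^ n * Δ := by
    intro n
    induction n with
    | zero => simp
    | succ k ih => rw [pow_succ, ← mul_assoc, ih, mul_assoc, h2, pow_succ]; group
  have main' : Δ * (σ₂ ^ (q + 1) * σ₁ ^ (p + 1)) = σ₁ ^ (q + 1) * (σ₂ ^ (p + 1) * Δ) := by
    rw [← mul_assoc, h2n, mul_assoc, h1n]
  have main : σ₁ ^ (q + 1) * σ₂ ^ (p + 1) = Δ * (σ₂ ^ (q + 1) * σ₁ ^ (p + 1)) * Δ⁻¹ := by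
    rw [main']; group
  refine isConj_iff.mpr ⟨Δ * σ₂ ^ q * σ₁⁻¹, ?_⟩
  rw [ha, conj_pow, hδ, main]
  rw [pow_succ σ₂ q, pow_succ σ₁ p]
  group
end

section
/- For all integers p, q ≥ 1, the element δ₃⁴ σ₁^p a₁₃^q is conjugate to σ₁^{p+3} σ₂ σ₁^{q+3} σ₂. -/
/-- For `p, q ≥ 1`, `δ₃⁴ σ₁^p a₁₃^q` is conjugate to `σ₁^{p+3} σ₂ σ₁^{q+3} σ₂`. -/
theorem delta4_sigma_a_conj {G : Type*} [Group G] (σ₁ σ₂ : G)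
    (hb : σ₁ * σ₂ * σ₁ = σ₂ * σ₁ * σ₂) (δ a : G)
    (hδ : δ = σ₁ * σ₂) (ha : a = σ₁ * σ₂ * σ₁⁻¹)
    (p q : ℕ) (hp : 1 ≤ p) (hq : 1 ≤ q) :
    IsConj (δ ^ 4 * σ₁ ^ p * a ^ q)
      (σ₁ ^ (p + 3) * σ₂ * σ₁ ^ (q + 3) * σ₂) := by
  have cyc : ∀ x y : G, IsConj (x * y) (y * x) := fun x y =>
    isConj_iff.mpr ⟨x⁻¹, by simp [mul_assoc]⟩
  have hσ : σ₂ = δ * σ₁ * δ⁻¹ := by subst hδ; rw [hb]; simp [mul_assoc]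
  have ha' : a = (σ₁ * δ) * σ₁ * (σ₁ * δ)⁻¹ := by
    rw [ha, hσ]; simp [mul_assoc]
  have hd2 : δ * δ = σ₁ * (σ₁ * σ₂ * σ₁) := by rw [hb, hδ]; simp [mul_assoc]
  have hd4 : δ ^ 4 = σ₁ * δ * σ₁ ^ 3 * σ₂ * σ₁ := by
    have h4 : δ ^ 4 = (δ * δ) * (δ * δ) := by simp [pow_succ, mul_assoc]
    rw [h4, hd2, hδ]; simp [pow_succ, mul_assoc]
  have h1 : δ ^ 4 * σ₁ ^ p * a ^ q
      = (δ ^ 4 * σ₁ ^ (p + 1) * δ * σ₁ ^ q) * (σ₁ * δ)⁻¹ := by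
    rw [ha', conj_pow]; simp [pow_add, mul_assoc]
  rw [h1]
  refine (cyc _ _).trans ?_
  have h2 : (σ₁ * δ)⁻¹ * (δ ^ 4 * σ₁ ^ (p + 1) * δ * σ₁ ^ q)
      = ((σ₁ * δ)⁻¹ * δ ^ 4 * σ₁ ^ (p + 1) * δ) * σ₁ ^ q := by simp [mul_assoc]
  rw [h2]
  refine (cyc _ _).trans ?_
  have hc : ∀ (n : ℕ) (x : G), σ₁ * (σ₁ ^ n * x) = σ₁ ^ n * (σ₁ * x) := fun n x => by
    rw [← mul_assoc, ← pow_mul_comm', mul_assoc]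
  have h3 : σ₁ ^ q * ((σ₁ * δ)⁻¹ * δ ^ 4 * σ₁ ^ (p + 1) * δ)
      = (σ₁ ^ (q + 3) * σ₂) * (σ₁ ^ (p + 3) * σ₂) := by
    rw [hd4, hδ]; simp [pow_add, pow_succ, mul_assoc, pow_mul_comm', hc]
  rw [h3]
  simpa [mul_assoc] using cyc (σ₁ ^ (q + 3) * σ₂) (σ₁ ^ (p + 3) * σ₂)
end

section
/- For every integer p ≥ 1, the following conjugacies hold: δ₃ σ₁^p is conjugate to σ₁^{p+1} σ₂; δ₃² σ₁^p is conjugate to σ₁^{p+3} σ₂; δ₃³ σ₁^p is conjugate to σ₁^{p+2} σ₂ σ₁² σ₂; δ₃⁴ σ₁^p is conjugate to σ₁^{p+3} σ₂ σ₁³ σ₂; and δ₃⁵ σ₁^p is conjugate to σ₁^{p+2} σ₂ σ₁³ σ₂ σ₁² σ₂. -/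
/-- For `p ≥ 1`: `δ₃^k σ₁^p` is conjugate to the indicated positive braids for
`k = 1, 2, 3, 4, 5`. -/
theorem deltak_sigma_pow_conj {G : Type*} [Group G] (σ₁ σ₂ : G)
    (hb : σ₁ * σ₂ * σ₁ = σ₂ * σ₁ * σ₂) (δ : G) (hδ : δ = σ₁ * σ₂)
    (p : ℕ) (hp : 1 ≤ p) :
    IsConj (δ * σ₁ ^ p) (σ₁ ^ (p + 1) * σ₂) ∧
    IsConj (δ ^ 2 * σ₁ ^ p) (σ₁ ^ (p + 3) * σ₂) ∧
    IsConj (δ ^ 3 * σ₁ ^ p) (σ₁ ^ (p + 2) * σ₂ * σ₁ ^ 2 * σ₂) ∧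
    IsConj (δ ^ 4 * σ₁ ^ p) (σ₁ ^ (p + 3) * σ₂ * σ₁ ^ 3 * σ₂) ∧
    IsConj (δ ^ 5 * σ₁ ^ p) (σ₁ ^ (p + 2) * σ₂ * σ₁ ^ 3 * σ₂ * σ₁ ^ 2 * σ₂) := by
  subst hδ
  have hR : ∀ x : G, σ₂ * (σ₁ * (σ₂ * x)) = σ₁ * (σ₂ * (σ₁ * x)) := by
    intro x; simp only [← mul_assoc]; rw [hb]
  have hb' : σ₂ * (σ₁ * σ₂) = σ₁ * (σ₂ * σ₁) := by simpa [mul_assoc] using hb.symm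
  have hd2 : (σ₁ * σ₂) ^ 2 = σ₁⁻¹ * (σ₁ ^ 3 * σ₂ * σ₁) := by
    have h : σ₁ * (σ₁ * σ₂) ^ 2 = σ₁ ^ 3 * σ₂ * σ₁ := by
      simp only [pow_succ, pow_zero, one_mul, mul_assoc, hR, hb']
    rw [← h]; group
  have hd3 : (σ₁ * σ₂) ^ 3 = σ₁ ^ 2 * σ₂ * σ₁ ^ 2 * σ₂ := by
    simp only [pow_succ, pow_zero, one_mul, mul_assoc, hR]
  have hd4 : (σ₁ * σ₂) ^ 4 = σ₁⁻¹ * (σ₁ ^ 3 * σ₂ * σ₁ ^ 3 * σ₂ * σ₁) := by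
    have h : σ₁ * (σ₁ * σ₂) ^ 4 = σ₁ ^ 3 * σ₂ * σ₁ ^ 3 * σ₂ * σ₁ := by
      simp only [pow_succ, pow_zero, one_mul, mul_assoc, hR, hb']
    rw [← h]; group
  have hd5 : (σ₁ * σ₂) ^ 5 = σ₁ ^ 2 * σ₂ * σ₁ ^ 3 * σ₂ * σ₁ ^ 2 * σ₂ := by
    simp only [pow_succ, pow_zero, one_mul, mul_assoc, hR, hb']
  refine ⟨?_, ?_, ?_, ?_, ?_⟩
  · rw [isConj_iff]
    exact ⟨σ₁ ^ p, by group⟩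
  · rw [isConj_iff]
    exact ⟨σ₁ ^ (p + 1), by rw [hd2]; group⟩
  · rw [isConj_iff]
    exact ⟨σ₁ ^ p, by rw [hd3]; group⟩
  · rw [isConj_iff]
    exact ⟨σ₁ ^ (p + 1), by rw [hd4]; group⟩
  · rw [isConj_iff]
    exact ⟨σ₁ ^ p, by rw [hd5]; group⟩
end

section
/- Let A* be an 8 × 8 symmetric positive definite integer matrix whose last row is (0, 0, 0, 0, 0, 0, 1, 2) (hence, by symmetry, whose last column is (0, 0, 0, 0, 0, 0, 1, 2)ᵀ), and let A be its top-left 7 × 7 block. If A is congruent to E₇, then A* is congruent to E₈. -/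
open Matrix

namespace E8Aux

/-- The adjugate of the Cartan matrix `E₇`. -/
def N7 : Matrix (Fin 7) (Fin 7) ℤ :=
  !![4, 4, 6, 8, 6, 4, 2;
    4, 7, 8, 12, 9, 6, 3;
    6, 8, 12, 16, 12, 8, 4;
    8, 12, 16, 24, 18, 12, 6;
    6, 9, 12, 18, 15, 10, 5;
    4, 6, 8, 12, 10, 8, 4;
    2, 3, 4, 6, 5, 4, 3]

/-- A vector detecting the nontrivial coset of `E₇` inside its dual. -/
def av : Fin 7 → ℤ := ![0, 1, 0, 0, 1, 0, 1]

def D7 : Matrix (Fin 7) (Fin 7) ℤ :=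
  !![1, 0, 0, 0, 0, 0, 0;
    0, 1, 0, 0, 0, 0, 0;
    0, 0, 3, 0, 0, 0, 0;
    0, 0, 0, 6, 0, 0, 0;
    0, 0, 0, 0, 3, 0, 0;
    0, 0, 0, 0, 0, 2, 0;
    0, 0, 0, 0, 0, 0, 0]

def S7 : Matrix (Fin 7) (Fin 7) ℤ :=
  !![0, 2, 3, 4, 3, 2, 1;
    0, 0, 4, 6, 3, 3, 0;
    0, 0, 0, 8, 6, 4, 2;
    0, 0, 0, 0, 9, 6, 3;
    0, 0, 0, 0, 0, 5, 1;
    0, 0, 0, 0, 0, 0, 2;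
    0, 0, 0, 0, 0, 0, 0]

def B7 : Matrix (Fin 7) (Fin 7) ℤ :=
  !![2, 2, 3, 4, 3, 2, 1;
    2, 3, 4, 6, 4, 3, 1;
    3, 4, 6, 8, 6, 4, 2;
    4, 6, 8, 12, 9, 6, 3;
    3, 4, 6, 9, 7, 5, 2;
    2, 3, 4, 6, 5, 4, 2;
    1, 1, 2, 3, 2, 2, 1]

/-- The last column of `E₈` above the corner entry. -/
def uv : Fin 7 → ℤ := ![0, 0, 0, 0, 0, 0, -1]

/-- The last row of `Astar` before the corner entry. -/
def vp : Fin 7 → ℤ := ![0, 0, 0, 0, 0, 0, 1]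

lemma EN : CartanMatrix.E₇ * N7 = (2 : ℤ) • (1 : Matrix (Fin 7) (Fin 7) ℤ) := by decide
lemma Nsymm : N7ᵀ = N7 := by decide
lemma Ndecomp : N7 = (3 : ℤ) • vecMulVec av av + (4 : ℤ) • D7 + (2 : ℤ) • S7 + (2 : ℤ) • S7ᵀ := by
  decide
lemma Bdecomp : N7 = vecMulVec av av + (2 : ℤ) • B7 := by decide
lemma av_uv : av ⬝ᵥ uv = -1 := by decide
lemma uvNuv : uv ⬝ᵥ (N7 *ᵥ uv) = 3 := by decide

lemma vecMulVec_mulVec' {n : ℕ} (a b x : Fin n → ℤ) :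
    (vecMulVec a b) *ᵥ x = (b ⬝ᵥ x) • a := by
  ext i
  simp [vecMulVec_apply, mulVec, dotProduct, Finset.mul_sum, mul_assoc, mul_comm, mul_left_comm]

lemma swap_dot {n : ℕ} {M : Matrix (Fin n) (Fin n) ℤ} (hM : Mᵀ = M) (y z : Fin n → ℤ) :
    y ⬝ᵥ (M *ᵥ z) = z ⬝ᵥ (M *ᵥ y) := by
  rw [dotProduct_mulVec, ← hM, vecMul_transpose, hM, dotProduct_comm]

lemma vecMul_eq (P : Matrix (Fin 7) (Fin 7) ℤ) (y : Fin 7 → ℤ) : y ᵥ* P = Pᵀ *ᵥ y := by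
  rw [← transpose_transpose P, vecMul_transpose, transpose_transpose]

/-- column matrix -/
def colM (v : Fin 7 → ℤ) : Matrix (Fin 7) (Fin 1) ℤ := of fun i _ => v i
/-- row matrix -/
def rowM (v : Fin 7 → ℤ) : Matrix (Fin 1) (Fin 7) ℤ := of fun _ j => v j
/-- 1×1 matrix -/
def cst (s : ℤ) : Matrix (Fin 1) (Fin 1) ℤ := of fun _ _ => s

lemma colM_transpose (v : Fin 7 → ℤ) : (colM v)ᵀ = rowM v := rfl
lemma colM_add (y z : Fin 7 → ℤ) : colM y + colM z = colM (y + z) := rfl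
lemma rowM_add (y z : Fin 7 → ℤ) : rowM y + rowM z = rowM (y + z) := rfl
lemma cst_add (s t : ℤ) : cst s + cst t = cst (s + t) := rfl

lemma mul_colM (M : Matrix (Fin 7) (Fin 7) ℤ) (w : Fin 7 → ℤ) :
    M * colM w = colM (M *ᵥ w) := by
  ext i j; simp [colM, mul_apply, mulVec, dotProduct]

lemma rowM_mul (M : Matrix (Fin 7) (Fin 7) ℤ) (w : Fin 7 → ℤ) :
    rowM w * M = rowM (w ᵥ* M) := by
  ext i j; simp [rowM, mul_apply, vecMul, dotProduct]

lemma rowM_mul_colM (w z : Fin 7 → ℤ) : rowM w * colM z = cst (w ⬝ᵥ z) := by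
  ext i j; simp [rowM, colM, cst, mul_apply, dotProduct]

lemma snoc_dot (b y : Fin 7 → ℤ) (t s : ℤ) :
    (Fin.snoc b t : Fin 8 → ℤ) ⬝ᵥ (Fin.snoc y s : Fin 8 → ℤ) = b ⬝ᵥ y + t * s := by
  simp [dotProduct, Fin.sum_univ_castSucc]
  rfl

/-- The index equivalence. -/
def e : Fin 7 ⊕ Fin 1 ≃ Fin 8 := finSumFinEquiv

lemma hE8block : CartanMatrix.E₈.submatrix e e =
    fromBlocks CartanMatrix.E₇ (colM uv) (rowM uv) (cst 2) := by decide

lemma hl7 : Fin.last 7 = (7 : Fin 8) := by decide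
lemma hcast8 : ∀ j : Fin 7, (![0, 0, 0, 0, 0, 0, 1, 2] : Fin 8 → ℤ) j.castSucc = vp j := by decide
lemma h72 : (![0, 0, 0, 0, 0, 0, 1, 2] : Fin 8 → ℤ) 7 = 2 := by decide
lemma vp6 : vp 6 = 1 := by decide

end E8Aux

open E8Aux

/-- If `A*` is a symmetric positive definite integer matrix of rank 8 whose last
row is `(0,0,0,0,0,0,1,2)` and whose top-left `7 × 7` block `A` is congruent to
`E₇`, then `A*` is congruent to `E₈`. -/
theorem e7_extension_is_e8 (Astar : Matrix (Fin 8) (Fin 8) ℤ)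
    (hsymm : Astar.IsSymm)
    (hpos : ∀ x : Fin 8 → ℤ, x ≠ 0 → 0 < x ⬝ᵥ Astar.mulVec x)
    (hlast : ∀ j : Fin 8, Astar 7 j = ![0, 0, 0, 0, 0, 0, 1, 2] j)
    (A : Matrix (Fin 7) (Fin 7) ℤ)
    (hA : ∀ i j : Fin 7, A i j = Astar i.castSucc j.castSucc)
    (hcong : ∃ P : Matrix (Fin 7) (Fin 7) ℤ, (P.det = 1 ∨ P.det = -1) ∧
      Pᵀ * A * P = CartanMatrix.E₇) :
    ∃ P : Matrix (Fin 8) (Fin 8) ℤ, (P.det = 1 ∨ P.det = -1) ∧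
      Pᵀ * Astar * P = CartanMatrix.E₈ := by
  obtain ⟨P, hPdet, hPE⟩ := hcong
  have hA' : Aᵀ = A := by
    ext i j
    rw [transpose_apply, hA, hA, hsymm.apply]
  have hv : ∀ i : Fin 7, Astar i.castSucc 7 = vp i := by
    intro i
    rw [← hsymm.apply, hlast, hcast8]
  -- evaluation of Astar on snoc vectors
  have hmv : ∀ (b : Fin 7 → ℤ) (t : ℤ),
      Astar *ᵥ (Fin.snoc b t : Fin 8 → ℤ) =
        Fin.snoc (A *ᵥ b + t • vp) (vp ⬝ᵥ b + 2 * t) := by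
    intro b t
    ext i
    induction i using Fin.lastCases with
    | last =>
      rw [Fin.snoc_last]
      show (∑ j : Fin 8, Astar (Fin.last 7) j * (Fin.snoc b t : Fin 8 → ℤ) j) = _
      rw [Fin.sum_univ_castSucc]
      simp only [Fin.snoc_castSucc, Fin.snoc_last]
      simp only [hl7, hlast, hcast8, h72]
      simp only [dotProduct]
    | cast i =>
      rw [Fin.snoc_castSucc]
      show (∑ j : Fin 8, Astar i.castSucc j * (Fin.snoc b t : Fin 8 → ℤ) j) = _
      rw [Fin.sum_univ_castSucc]
      simp only [Fin.snoc_castSucc, Fin.snoc_last]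
      simp only [hl7, hv, ← hA]
      simp only [Pi.add_apply, Pi.smul_apply, smul_eq_mul, mulVec, dotProduct]
      ring
  have hquad : ∀ (b : Fin 7 → ℤ) (t : ℤ),
      (Fin.snoc b t : Fin 8 → ℤ) ⬝ᵥ (Astar *ᵥ (Fin.snoc b t)) =
        b ⬝ᵥ (A *ᵥ b) + 2 * t * (vp ⬝ᵥ b) + 2 * t ^ 2 := by
    intro b t
    rw [hmv, snoc_dot, dotProduct_add, dotProduct_smul, smul_eq_mul,
      dotProduct_comm b vp]
    ring
  have hsnoc_ne : ∀ (b : Fin 7 → ℤ) (t : ℤ), t ≠ 0 → (Fin.snoc b t : Fin 8 → ℤ) ≠ 0 := by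
    intro b t ht h0
    apply ht
    have := congrFun h0 (Fin.last 7)
    rw [Fin.snoc_last] at this
    exact this
  have hsnoc_ne0 : ∀ b : Fin 7 → ℤ, b ≠ 0 → (Fin.snoc b (0 : ℤ) : Fin 8 → ℤ) ≠ 0 := by
    intro b hb h0
    apply hb
    ext i
    have := congrFun h0 i.castSucc
    simpa using this
  -- invertibility of P
  have hdetu : IsUnit P.det := by
    rcases hPdet with h | h <;> rw [h]
    · exact isUnit_one
    · exact isUnit_one.neg
  letI : Invertible P := P.invertibleOfIsUnitDet hdetu
  have hPinj : ∀ y : Fin 7 → ℤ, P *ᵥ y = 0 → y = 0 := by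
    intro y hy
    have : (⅟P * P) *ᵥ y = ⅟P *ᵥ (P *ᵥ y) := (mulVec_mulVec y (⅟P) P).symm
    rw [invOf_mul_self, one_mulVec, hy, mulVec_zero] at this
    exact this
  have hPTinj : ∀ y : Fin 7 → ℤ, Pᵀ *ᵥ y = 0 → y = 0 := by
    intro y hy
    have : (⅟(Pᵀ) * Pᵀ) *ᵥ y = ⅟(Pᵀ) *ᵥ (Pᵀ *ᵥ y) := (mulVec_mulVec y (⅟(Pᵀ)) Pᵀ).symm
    rw [invOf_mul_self, one_mulVec, hy, mulVec_zero] at this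
    exact this
  obtain ⟨x, hxdef⟩ : ∃ x : Fin 7 → ℤ, x = Pᵀ *ᵥ vp := ⟨_, rfl⟩
  have hx0 : x ≠ 0 := by
    intro h
    rw [hxdef] at h
    have := hPTinj vp h
    have h6 := congrFun this 6
    rw [vp6] at h6
    exact one_ne_zero h6
  -- E₇ is positive definite over ℤ
  have hE7dot : ∀ y : Fin 7 → ℤ,
      y ⬝ᵥ (CartanMatrix.E₇ *ᵥ y) = (P *ᵥ y) ⬝ᵥ (A *ᵥ (P *ᵥ y)) := by
    intro y
    rw [← hPE, ← mulVec_mulVec, ← mulVec_mulVec, dotProduct_mulVec, vecMul_transpose]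
  have hApos : ∀ b : Fin 7 → ℤ, b ≠ 0 → 0 < b ⬝ᵥ (A *ᵥ b) := by
    intro b hb
    have h := hpos (Fin.snoc b 0) (hsnoc_ne0 b hb)
    rw [hquad] at h
    simpa using h
  have hE7pos : ∀ y : Fin 7 → ℤ, y ≠ 0 → 0 < y ⬝ᵥ (CartanMatrix.E₇ *ᵥ y) := by
    intro y hy
    rw [hE7dot]
    exact hApos _ fun h => hy (hPinj y h)
  obtain ⟨q, hqdef⟩ : ∃ q : ℤ, q = x ⬝ᵥ (N7 *ᵥ x) := ⟨_, rfl⟩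
  have hvpP : ∀ z : Fin 7 → ℤ, vp ⬝ᵥ (P *ᵥ z) = x ⬝ᵥ z := by
    intro z
    rw [dotProduct_mulVec, vecMul_eq, ← hxdef]
  -- upper bound: q ≤ 3
  have hub : 0 < 8 - 2 * q := by
    have h := hpos (Fin.snoc (P *ᵥ (-(N7 *ᵥ x))) 2) (hsnoc_ne _ 2 two_ne_zero)
    rw [hquad] at h
    have h1 : (P *ᵥ (-(N7 *ᵥ x))) ⬝ᵥ (A *ᵥ (P *ᵥ (-(N7 *ᵥ x)))) = 2 * q := by
      rw [← hE7dot, mulVec_neg, neg_dotProduct, dotProduct_neg, neg_neg,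
        mulVec_mulVec x CartanMatrix.E₇ N7, EN, smul_mulVec, one_mulVec,
        dotProduct_smul, smul_eq_mul, dotProduct_comm, hqdef]
    have h2 : vp ⬝ᵥ (P *ᵥ (-(N7 *ᵥ x))) = -q := by
      rw [hvpP, dotProduct_neg, hqdef]
    rw [h1, h2] at h
    linarith
  -- lower bound: 0 < q
  have hql : 0 < q := by
    by_cases hy : N7 *ᵥ x = 0
    · exfalso
      apply hx0
      have h2x : (2 : ℤ) • x = CartanMatrix.E₇ *ᵥ (N7 *ᵥ x) := by
        rw [mulVec_mulVec x CartanMatrix.E₇ N7, EN, smul_mulVec, one_mulVec]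
      rw [hy, mulVec_zero] at h2x
      have := smul_right_injective (Fin 7 → ℤ) (two_ne_zero (α := ℤ))
      exact this (by simpa using h2x)
    · have hp := hE7pos _ hy
      rw [mulVec_mulVec x CartanMatrix.E₇ N7, EN, smul_mulVec, one_mulVec,
        dotProduct_smul, smul_eq_mul, dotProduct_comm, ← hqdef] at hp
      linarith
  -- the mod 4 decomposition
  have hdec : q = 3 * (av ⬝ᵥ x) ^ 2 + 4 * (x ⬝ᵥ (D7 *ᵥ x) + x ⬝ᵥ (S7 *ᵥ x)) := by
    have hswap : x ⬝ᵥ (S7ᵀ *ᵥ x) = x ⬝ᵥ (S7 *ᵥ x) := by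
      rw [dotProduct_mulVec, vecMul_transpose, dotProduct_comm]
    have hvv : x ⬝ᵥ ((vecMulVec av av) *ᵥ x) = (av ⬝ᵥ x) ^ 2 := by
      rw [vecMulVec_mulVec', dotProduct_smul, smul_eq_mul, dotProduct_comm]
      ring
    calc q = x ⬝ᵥ (N7 *ᵥ x) := hqdef
      _ = x ⬝ᵥ (((3 : ℤ) • vecMulVec av av + (4 : ℤ) • D7 + (2 : ℤ) • S7 + (2 : ℤ) • S7ᵀ) *ᵥ x) := by
          rw [← Ndecomp]
      _ = 3 * (x ⬝ᵥ ((vecMulVec av av) *ᵥ x)) + 4 * (x ⬝ᵥ (D7 *ᵥ x)) + 2 * (x ⬝ᵥ (S7 *ᵥ x))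
            + 2 * (x ⬝ᵥ (S7ᵀ *ᵥ x)) := by
          rw [add_mulVec, add_mulVec, add_mulVec, dotProduct_add, dotProduct_add, dotProduct_add,
            smul_mulVec, smul_mulVec, smul_mulVec, smul_mulVec,
            dotProduct_smul, dotProduct_smul, dotProduct_smul, dotProduct_smul]
          simp [smul_eq_mul]
      _ = 3 * (av ⬝ᵥ x) ^ 2 + 4 * (x ⬝ᵥ (D7 *ᵥ x) + x ⬝ᵥ (S7 *ᵥ x)) := by
          rw [hswap, hvv]; ring
  -- conclude q = 3 and av ⬝ᵥ x odd
  have hkey : q = 3 ∧ ∃ s : ℤ, av ⬝ᵥ x = 2 * s + 1 := by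
    rcases Int.even_or_odd (av ⬝ᵥ x) with ⟨s, hs⟩ | ⟨s, hs⟩
    · exfalso
      have h4 : q = 4 * (3 * s ^ 2 + (x ⬝ᵥ (D7 *ᵥ x) + x ⬝ᵥ (S7 *ᵥ x))) := by
        rw [hdec, hs]; ring
      obtain ⟨m, hm⟩ : ∃ m : ℤ, q = 4 * m := ⟨_, h4⟩
      omega
    · have h4 : q = 4 * (3 * s ^ 2 + 3 * s + (x ⬝ᵥ (D7 *ᵥ x) + x ⬝ᵥ (S7 *ᵥ x))) + 3 := by
        rw [hdec, hs]; ring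
      obtain ⟨m, hm⟩ : ∃ m : ℤ, q = 4 * m + 3 := ⟨_, h4⟩
      exact ⟨by omega, s, hs⟩
  obtain ⟨hq3, s, hds⟩ := hkey
  -- construct the gluing vector
  have hk : av ⬝ᵥ (uv - x) = 2 * (-1 - s) := by
    rw [dotProduct_sub, av_uv, hds]; ring
  obtain ⟨c', hc'def⟩ : ∃ c' : Fin 7 → ℤ, c' = (-1 - s) • av + B7 *ᵥ (uv - x) := ⟨_, rfl⟩
  have h2c' : (2 : ℤ) • c' = N7 *ᵥ (uv - x) := by
    rw [hc'def, Bdecomp, add_mulVec, vecMulVec_mulVec', hk, smul_mulVec, smul_add,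
      smul_smul]
  have hE7c' : CartanMatrix.E₇ *ᵥ c' = uv - x := by
    have h : (2 : ℤ) • (CartanMatrix.E₇ *ᵥ c') = (2 : ℤ) • (uv - x) := by
      rw [← mulVec_smul, h2c', mulVec_mulVec, EN, smul_mulVec, one_mulVec]
    exact smul_right_injective (Fin 7 → ℤ) (two_ne_zero (α := ℤ)) h
  obtain ⟨c, hcdef⟩ : ∃ c : Fin 7 → ℤ, c = P *ᵥ c' := ⟨_, rfl⟩
  have hvec : Pᵀ *ᵥ (A *ᵥ c) + x = uv := by
    rw [hcdef, mulVec_mulVec c' A P, mulVec_mulVec c' Pᵀ (A * P), ← Matrix.mul_assoc, hPE,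
      hE7c']
    abel
  have hvec' : Pᵀ *ᵥ (A *ᵥ c) = uv - x := by rw [← hvec]; abel
  have hortho : (uv + x) ⬝ᵥ c' = 0 := by
    have h2 : (2 : ℤ) * ((uv + x) ⬝ᵥ c') = 0 := by
      have : (uv + x) ⬝ᵥ ((2 : ℤ) • c') = 2 * ((uv + x) ⬝ᵥ c') := by
        rw [dotProduct_smul, smul_eq_mul]
      rw [← this, h2c', mulVec_sub, dotProduct_sub, add_dotProduct, add_dotProduct,
        uvNuv, swap_dot Nsymm x uv]
      have h3 : x ⬝ᵥ (N7 *ᵥ x) = 3 := by rw [← hqdef, hq3]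
      rw [h3]
      ring
    linarith
  have hdot1 : vp ⬝ᵥ c = x ⬝ᵥ c' := by
    rw [hcdef]; exact hvpP c'
  have hdot2 : c ⬝ᵥ (A *ᵥ c) = (uv - x) ⬝ᵥ c' := by
    conv_lhs => rw [dotProduct_comm, hcdef]
    rw [dotProduct_mulVec, vecMul_eq, ← hcdef, hvec']
  -- the block congruence matrix
  set Q : Matrix (Fin 7 ⊕ Fin 1) (Fin 7 ⊕ Fin 1) ℤ := fromBlocks P (colM c) 0 1 with hQdef
  have hQdet : Q.det = P.det := by
    rw [hQdef, det_fromBlocks_zero₂₁]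
    simp
  have hQT : Qᵀ = fromBlocks Pᵀ 0 (rowM c) 1 := by
    rw [hQdef, fromBlocks_transpose, colM_transpose, transpose_zero, transpose_one]
  have hS' : Astar.submatrix e e = fromBlocks A (colM vp) (rowM vp) (cst 2) := by
    ext i j
    rcases i with i | i <;> rcases j with j | j
    · simp only [submatrix_apply, fromBlocks_apply₁₁]
      rw [show e (Sum.inl i) = i.castSucc from rfl, show e (Sum.inl j) = j.castSucc from rfl]
      exact (hA i j).symm
    · simp only [submatrix_apply, fromBlocks_apply₁₂]
      rw [show e (Sum.inl i) = i.castSucc from rfl,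
        show e (Sum.inr j) = (7 : Fin 8) from by rcases j with ⟨j, hj⟩; interval_cases j; rfl]
      exact hv i
    · simp only [submatrix_apply, fromBlocks_apply₂₁]
      rw [show e (Sum.inr i) = (7 : Fin 8) from by rcases i with ⟨i, hi⟩; interval_cases i; rfl,
        show e (Sum.inl j) = j.castSucc from rfl, hlast, hcast8]
      rfl
    · simp only [submatrix_apply, fromBlocks_apply₂₂]
      rw [show e (Sum.inr i) = (7 : Fin 8) from by rcases i with ⟨i, hi⟩; interval_cases i; rfl,
        show e (Sum.inr j) = (7 : Fin 8) from by rcases j with ⟨j, hj⟩; interval_cases j; rfl,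
        hlast, h72]
      rfl
  -- the main block computation
  have hmul : Qᵀ * Astar.submatrix e e * Q = CartanMatrix.E₈.submatrix e e := by
    rw [hQT, hS', hE8block, hQdef, fromBlocks_multiply, fromBlocks_multiply, fromBlocks_inj]
    have hcA : c ᵥ* A = A *ᵥ c := by rw [vecMul_eq, hA']
    refine ⟨?_, ?_, ?_, ?_⟩
    · simp only [Matrix.mul_zero, Matrix.zero_mul, add_zero]
      exact hPE
    · simp only [Matrix.mul_zero, Matrix.zero_mul, add_zero, Matrix.mul_one]
      rw [Matrix.mul_assoc Pᵀ A (colM c), mul_colM, mul_colM, mul_colM, colM_add,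
        mulVec_mulVec c Pᵀ A, ← mulVec_mulVec c Pᵀ A, ← hxdef]
      exact congrArg colM hvec
    · simp only [Matrix.mul_zero, Matrix.zero_mul, add_zero, Matrix.one_mul]
      rw [rowM_mul, rowM_add, rowM_mul]
      rw [add_vecMul, hcA, vecMul_eq, vecMul_eq, ← hxdef]
      exact congrArg rowM hvec
    · simp only [Matrix.mul_zero, Matrix.zero_mul, add_zero, Matrix.one_mul, Matrix.mul_one]
      rw [rowM_mul, rowM_add, rowM_mul_colM, rowM_mul_colM, cst_add, cst_add]
      rw [add_dotProduct, hcA, dotProduct_comm (A *ᵥ c) c, hdot2, hdot1,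
        dotProduct_comm c vp, hdot1]
      rw [add_dotProduct] at hortho
      rw [sub_dotProduct] at hdot2 ⊢
      exact congrArg cst (by linarith)
  -- assemble the final congruence
  refine ⟨Q.submatrix e.symm e.symm, ?_, ?_⟩
  · rw [det_submatrix_equiv_self, hQdet]
    exact hPdet
  · have hback : (Astar.submatrix ⇑e ⇑e).submatrix ⇑e.symm ⇑e.symm = Astar := by
      rw [submatrix_submatrix]
      simp
    calc (Q.submatrix ⇑e.symm ⇑e.symm)ᵀ * Astar * Q.submatrix ⇑e.symm ⇑e.symm
        = Qᵀ.submatrix ⇑e.symm ⇑e.symm * (Astar.submatrix ⇑e ⇑e).submatrix ⇑e.symm ⇑e.symm *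
          Q.submatrix ⇑e.symm ⇑e.symm := by rw [transpose_submatrix, hback]
      _ = (Qᵀ * Astar.submatrix ⇑e ⇑e * Q).submatrix ⇑e.symm ⇑e.symm := by
          rw [submatrix_mul_equiv, submatrix_mul_equiv]
      _ = (CartanMatrix.E₈.submatrix ⇑e ⇑e).submatrix ⇑e.symm ⇑e.symm := by rw [hmul]
      _ = CartanMatrix.E₈ := by
          rw [submatrix_submatrix]
          simp
end

section
/- Let n be an odd natural number and let B be an n × n symmetric integer matrix all of whose diagonal entries are even. Then det B is even. -/
/-- An odd-rank even symmetric integer matrix (symmetric with all diagonal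
entries even) has even determinant. -/
theorem even_symm_odd_rank_det_even (n : ℕ) (hn : Odd n)
    (B : Matrix (Fin n) (Fin n) ℤ) (hsymm : B.IsSymm)
    (hdiag : ∀ i : Fin n, Even (B i i)) : Even B.det := by
  -- skew-symmetric integer matrix congruent to B mod 2
  set S : Matrix (Fin n) (Fin n) ℤ :=
    Matrix.of (fun i j => if i < j then B i j else if j < i then -(B i j) else 0) with hS
  have hskew : S.transpose = -S := by
    ext i j
    simp only [hS, Matrix.transpose_apply, Matrix.neg_apply, Matrix.of_apply]
    rcases lt_trichotomy i j with h | h | h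
    · simp [h, not_lt.mpr h.le, hsymm.apply i j]
    · simp [h]
    · simp [h, not_lt.mpr h.le, hsymm.apply i j]
  have hdetS : S.det = 0 := by
    have h1 : S.det = (-1) ^ n * S.det := by
      conv_lhs => rw [← Matrix.det_transpose S, hskew, Matrix.det_neg]
      simp
    rw [hn.neg_one_pow] at h1
    linarith
  -- reduce mod 2
  have hcast : (B.map (Int.cast : ℤ → ZMod 2)) = S.map (Int.cast : ℤ → ZMod 2) := by
    ext i j
    simp only [Matrix.map_apply, hS, Matrix.of_apply]
    rcases lt_trichotomy i j with h | h | h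
    · simp [h]
    · subst h
      simp only [lt_irrefl, if_false]
      exact (ZMod.intCast_zmod_eq_zero_iff_dvd _ 2).mpr ((hdiag i).two_dvd)
    · simp [not_lt.mpr h.le, h, Int.cast_neg, CharTwo.neg_eq (R := ZMod 2)]
  have : ((B.det : ℤ) : ZMod 2) = 0 := by
    calc ((B.det : ℤ) : ZMod 2) = (B.map (Int.cast : ℤ → ZMod 2)).det :=
          RingHom.map_det (Int.castRingHom (ZMod 2)) B
      _ = (S.map (Int.cast : ℤ → ZMod 2)).det := by rw [hcast]
      _ = ((S.det : ℤ) : ZMod 2) := (RingHom.map_det (Int.castRingHom (ZMod 2)) S).symm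
      _ = 0 := by rw [hdetS]; simp
  rw [even_iff_two_dvd]
  exact (ZMod.intCast_zmod_eq_zero_iff_dvd _ 2).mp this
end

section
/- For every integer m ≥ 3 and every ε ∈ {1, −1}: if m is odd then det Q_m(ε) = 2 + 2ε, and if m is even then det Q_m(ε) = 2 − 2ε. -/
/-- The twisted cyclic shift matrix: entry `1` at positions `(j+1, j)`,
and `ε` at `(0, n)`. -/
def shiftS (n : ℕ) (ε : ℤ) : Matrix (Fin (n+1)) (Fin (n+1)) ℤ :=
  Matrix.of fun i j => if (i : ℕ) = ((j : ℕ) + 1) % (n+1) then (if (j : ℕ) = n then ε else 1) else 0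

lemma shiftS_lt (n : ℕ) (j : Fin (n+1)) : ((j : ℕ) + 1) % (n+1) < n + 1 :=
  Nat.mod_lt _ (Nat.succ_pos n)

lemma mul_shiftS (n : ℕ) (ε : ℤ) (M : Matrix (Fin (n+1)) (Fin (n+1)) ℤ) (i j : Fin (n+1)) :
    (M * shiftS n ε) i j
      = M i ⟨((j : ℕ) + 1) % (n+1), shiftS_lt n j⟩ * (if (j : ℕ) = n then ε else 1) := by
  rw [Matrix.mul_apply]
  have h : ∀ k : Fin (n+1), ((k : ℕ) = ((j : ℕ) + 1) % (n+1))
      ↔ k = ⟨((j : ℕ) + 1) % (n+1), shiftS_lt n j⟩ := fun k => by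
    rw [Fin.ext_iff]
  simp only [shiftS, Matrix.of_apply, h, mul_ite, mul_zero, mul_one,
    Finset.sum_ite_eq', Finset.mem_univ, if_true]

lemma det_shiftS (n : ℕ) (hn : 1 ≤ n) (ε : ℤ) : (shiftS n ε).det = (-1)^n * ε := by
  rw [Matrix.det_succ_row_zero]
  rw [Finset.sum_eq_single (Fin.last n)]
  · have h0 : shiftS n ε 0 (Fin.last n) = ε := by
      simp [shiftS, Fin.last, Nat.mod_self]
    have hsub : (shiftS n ε).submatrix Fin.succ (Fin.last n).succAbove = 1 := by
      rw [Fin.succAbove_last]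
      ext i j
      simp only [Matrix.submatrix_apply, shiftS, Matrix.of_apply, Matrix.one_apply,
        Fin.val_succ, Fin.coe_castSucc]
      rw [Nat.mod_eq_of_lt (by omega)]
      have hj : (j : ℕ) < n := j.isLt
      rcases eq_or_ne i j with h | h
      · subst h
        rw [if_pos rfl, if_neg (by omega : ¬ ((i:ℕ) = n)), if_pos rfl]
      · have : (i : ℕ) ≠ (j : ℕ) := fun hc => h (Fin.ext hc)
        simp [Fin.ext_iff, this, h]
    rw [h0, hsub, Matrix.det_one]
    simp [Fin.last]
  · intro j _ hj
    have hjn : (j : ℕ) ≠ n := fun hc => hj (Fin.ext (by simp [Fin.last, hc]))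
    have : shiftS n ε 0 j = 0 := by
      have : ((j : ℕ) + 1) % (n+1) ≠ 0 := by
        have := j.isLt
        rw [Nat.mod_eq_of_lt (by omega)]; omega
      simp [shiftS, Ne.symm this]
    simp [this]
  · simp

lemma det_shiftS_add_one (n : ℕ) (hn : 1 ≤ n) (ε : ℤ) :
    (shiftS n ε + 1).det = 1 + (-1)^n * ε := by
  rw [Matrix.det_succ_row_zero]
  rw [Finset.sum_eq_add_of_mem 0 (Fin.last n) (Finset.mem_univ _) (Finset.mem_univ _)
      (by simp [Fin.ext_iff, Fin.last]; omega)]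
  · have e00 : (shiftS n ε + 1) 0 0 = 1 := by
      simp [shiftS, Matrix.one_apply, Nat.mod_eq_of_lt (by omega : 1 < n+1)]
    have e0l : (shiftS n ε + 1) 0 (Fin.last n) = ε := by
      have h2 : ¬ ((0 : Fin (n+1)) = Fin.last n) := by
        simp only [Fin.ext_iff, Fin.val_zero, Fin.val_last]; omega
      simp [shiftS, Matrix.one_apply, h2, Fin.val_last, Nat.mod_self]
    have hsub0 : ((shiftS n ε + 1).submatrix Fin.succ (0 : Fin (n+1)).succAbove).det = 1 := by
      rw [Fin.succAbove_zero]
      rw [Matrix.det_of_lowerTriangular]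
      · rw [Fintype.prod_eq_one]
        intro i
        have hi : (i : ℕ) < n := i.isLt
        simp only [Matrix.submatrix_apply, Matrix.add_apply, shiftS, Matrix.of_apply,
          Matrix.one_apply, Fin.val_succ]
        have h1 : ¬ ((i : ℕ) + 1 = ((i : ℕ) + 1 + 1) % (n+1)) := by
          rcases eq_or_ne ((i:ℕ)+1) n with h | h
          · rw [h, Nat.mod_self]; omega
          · rw [Nat.mod_eq_of_lt (by omega)]; omega
        simp [h1]
      · intro i j hij
        have hij' : (i : ℕ) < (j : ℕ) := hij
        simp only [Matrix.submatrix_apply, Matrix.add_apply, shiftS, Matrix.of_apply,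
          Matrix.one_apply, Fin.val_succ]
        have hj : (j : ℕ) < n := j.isLt
        have h1 : ¬ ((i : ℕ) + 1 = ((j : ℕ) + 1 + 1) % (n+1)) := by
          rcases eq_or_ne ((j:ℕ)+1) n with h | h
          · rw [h, Nat.mod_self]; omega
          · rw [Nat.mod_eq_of_lt (by omega)]; omega
        have h2 : ¬ (Fin.succ i = Fin.succ j) := by
          simp [Fin.ext_iff]; omega
        simp [h1, h2]
    have hsubl : ((shiftS n ε + 1).submatrix Fin.succ (Fin.last n).succAbove).det = 1 := by
      rw [Fin.succAbove_last]
      rw [Matrix.det_of_upperTriangular]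
      · rw [Fintype.prod_eq_one]
        intro i
        have hi : (i : ℕ) < n := i.isLt
        simp only [Matrix.submatrix_apply, Matrix.add_apply, shiftS, Matrix.of_apply,
          Matrix.one_apply, Fin.val_succ, Fin.coe_castSucc]
        rw [Nat.mod_eq_of_lt (by omega)]
        have h2 : ¬ (Fin.succ i = Fin.castSucc i) := by simp [Fin.ext_iff]
        rw [if_pos rfl, if_neg (by omega : ¬ ((i:ℕ) = n)), if_neg h2]
        ring
      · intro i j hij
        have hij' : (j : ℕ) < (i : ℕ) := hij
        simp only [Matrix.submatrix_apply, Matrix.add_apply, shiftS, Matrix.of_apply,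
          Matrix.one_apply, Fin.val_succ, Fin.coe_castSucc]
        have hj : (j : ℕ) < n := j.isLt
        rw [Nat.mod_eq_of_lt (by omega)]
        have h2 : ¬ (Fin.succ i = Fin.castSucc j) := by
          simp only [Fin.ext_iff, Fin.val_succ, Fin.coe_castSucc]; omega
        rw [if_neg (by omega : ¬ ((i:ℕ) + 1 = (j:ℕ) + 1)), if_neg h2]
        ring
    rw [e00, e0l, hsub0, hsubl]
    simp [Fin.last]
  · intro j _ hj
    obtain ⟨hj0, hjl⟩ := hj
    have hj0' : (j : ℕ) ≠ 0 := fun hc => hj0 (Fin.ext (by simpa using hc))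
    have hjn : (j : ℕ) ≠ n := fun hc => hjl (Fin.ext (by simp [Fin.last, hc]))
    have hz : (shiftS n ε + 1) 0 j = 0 := by
      have h1 : ((j : ℕ) + 1) % (n+1) ≠ 0 := by
        have := j.isLt
        rw [Nat.mod_eq_of_lt (by omega)]; omega
      have h2 : ¬ ((0 : Fin (n+1)) = j) := fun hc => hj0' (by simp [← hc])
      simp [shiftS, Matrix.one_apply, Ne.symm h1, h2]
    simp [hz]

/-- Determinant of the circulant-type matrix `Q_m(ε)` (diagonal `2`, off
diagonal `1` on the two neighbouring diagonals, `ε` in the corners):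
`det Q_m(ε) = 2 + 2ε` for `m` odd and `2 - 2ε` for `m` even. -/
theorem det_Qm (m : ℕ) (hm : 3 ≤ m) (ε : ℤ) (hε : ε = 1 ∨ ε = -1)
    (Q : Matrix (Fin m) (Fin m) ℤ)
    (hQ : ∀ i j : Fin m, Q i j =
      if (i : ℕ) = (j : ℕ) then 2
      else if (i : ℕ) + 1 = (j : ℕ) ∨ (j : ℕ) + 1 = (i : ℕ) then 1
      else if ((i : ℕ) = 0 ∧ (j : ℕ) = m - 1) ∨
              ((j : ℕ) = 0 ∧ (i : ℕ) = m - 1) then ε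
      else 0) :
    (Odd m → Q.det = 2 + 2 * ε) ∧ (Even m → Q.det = 2 - 2 * ε) := by
  obtain ⟨n, rfl⟩ : ∃ n, m = n + 1 := ⟨m - 1, by omega⟩
  have hn : 2 ≤ n := by omega
  have key : Q * shiftS n ε = (shiftS n ε + 1) * (shiftS n ε + 1) := by
    have hexp : (shiftS n ε + 1) * (shiftS n ε + 1)
        = (shiftS n ε + 1) * shiftS n ε + (shiftS n ε + 1) := by
      rw [mul_add, mul_one]
    ext i j
    rw [hexp, Matrix.add_apply, mul_shiftS, mul_shiftS, Matrix.add_apply, Matrix.add_apply]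
    have hi := i.isLt
    have hj := j.isLt
    simp only [hQ, shiftS, Matrix.of_apply, Matrix.one_apply, Fin.ext_iff, Fin.val_zero]
    rcases eq_or_ne (j : ℕ) n with hb | hb
    · have m1 : ((j : ℕ) + 1) % (n+1) = 0 := by rw [hb]; exact Nat.mod_self _
      have m2 : ((0 : ℕ) + 1) % (n+1) = 1 := Nat.mod_eq_of_lt (by omega)
      simp only [m1, m2, Nat.add_sub_cancel]
      clear hQ hexp
      rcases hε with rfl | rfl <;> split_ifs <;>
        first
          | omega
          | (simp_all only [false_or, or_false, true_and, and_true, false_and, and_false,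
              true_or, or_true, not_true, not_false_iff] <;> omega)
    · have m1 : ((j : ℕ) + 1) % (n+1) = (j : ℕ) + 1 := Nat.mod_eq_of_lt (by omega)
      rcases eq_or_ne ((j : ℕ) + 1) n with hb2 | hb2
      · have e : (j : ℕ) + 1 + 1 = n + 1 := by omega
        have m2 : ((j : ℕ) + 1 + 1) % (n+1) = 0 := by rw [e]; exact Nat.mod_self _
        simp only [m1, m2, Nat.add_sub_cancel]
        clear hQ hexp
        rcases hε with rfl | rfl <;> split_ifs <;>
          first
            | omega
            | (simp_all only [false_or, or_false, true_and, and_true, false_and, and_false,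
                true_or, or_true, not_true, not_false_iff] <;> omega)
      · have m2 : ((j : ℕ) + 1 + 1) % (n+1) = (j : ℕ) + 1 + 1 := Nat.mod_eq_of_lt (by omega)
        simp only [m1, m2, Nat.add_sub_cancel]
        clear hQ hexp
        rcases hε with rfl | rfl <;> split_ifs <;>
          first
            | omega
            | (simp_all only [false_or, or_false, true_and, and_true, false_and, and_false,
                true_or, or_true, not_true, not_false_iff] <;> omega)
  have hdet := congrArg Matrix.det key
  rw [Matrix.det_mul, Matrix.det_mul, det_shiftS n (by omega) ε,
    det_shiftS_add_one n (by omega) ε] at hdet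
  constructor
  · intro hodd
    have hev : Even n := by
      obtain ⟨k, hk⟩ := hodd
      exact ⟨k, by omega⟩
    rw [hev.neg_one_pow] at hdet
    rcases hε with rfl | rfl <;> norm_num at hdet ⊢ <;> linarith
  · intro heven
    have hod : Odd n := by
      obtain ⟨k, hk⟩ := heven
      exact ⟨k - 1, by omega⟩
    rw [hod.neg_one_pow] at hdet
    rcases hε with rfl | rfl <;> norm_num at hdet ⊢ <;> linarith
end

section
/- For every integer m ≥ 3 and every ε ∈ {1, −1}, the real matrix obtained from Q_m(ε) by casting its entries to ℝ is positive definite if and only if either m is odd and ε = 1, or m is even and ε = −1. -/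
open Finset Matrix

set_option maxHeartbeats 1000000

lemma Qaux_sum (m : ℕ) (hm : 3 ≤ m) (e : ℝ) (y : ℕ → ℝ) :
    ∑ i ∈ range m, ∑ j ∈ range m,
      y i * ((if i = j then (2:ℝ)
        else if i + 1 = j ∨ j + 1 = i then 1
        else if (i = 0 ∧ j = m - 1) ∨ (j = 0 ∧ i = m - 1) then e else 0) * y j)
    = 2 * ∑ i ∈ range m, y i ^ 2 + 2 * ∑ k ∈ range (m - 1), y k * y (k + 1)
      + 2 * e * (y 0 * y (m - 1)) := by
  have hpt : ∀ i j : ℕ,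
      y i * ((if i = j then (2:ℝ)
        else if i + 1 = j ∨ j + 1 = i then 1
        else if (i = 0 ∧ j = m - 1) ∨ (j = 0 ∧ i = m - 1) then e else 0) * y j)
      = 2 * (if j = i then y i * y j else 0)
        + (if j = i + 1 then y i * y j else 0)
        + (if i = j + 1 then y i * y j else 0)
        + e * (if j = m - 1 then (if i = 0 then y i * y j else 0) else 0)
        + e * (if j = 0 then (if i = m - 1 then y i * y j else 0) else 0) := by
    intro i j
    split_ifs <;> first | ring1 | (exfalso; omega)
  simp only [hpt, Finset.sum_add_distrib]
  have h1 : ∑ i ∈ range m, ∑ j ∈ range m, 2 * (if j = i then y i * y j else 0)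
      = 2 * ∑ i ∈ range m, y i ^ 2 := by
    simp only [← Finset.mul_sum]
    congr 1
    refine Finset.sum_congr rfl fun i hi => ?_
    rw [Finset.sum_ite_eq' (range m) i, if_pos hi, sq]
  have h2 : ∑ i ∈ range m, ∑ j ∈ range m, (if j = i + 1 then y i * y j else 0)
      = ∑ k ∈ range (m - 1), y k * y (k + 1) := by
    rw [Finset.sum_congr rfl (fun i (hi : i ∈ range m) =>
      Finset.sum_ite_eq' (range m) (i + 1) (fun j => y i * y j))]
    obtain ⟨n, rfl⟩ : ∃ n, m = n + 1 := ⟨m - 1, by omega⟩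
    rw [Finset.sum_range_succ, if_neg (by simp), add_zero]
    simp only [Nat.add_sub_cancel]
    refine Finset.sum_congr rfl fun k hk => ?_
    rw [if_pos (by simp only [mem_range] at hk ⊢; omega)]
  have h3 : ∑ i ∈ range m, ∑ j ∈ range m, (if i = j + 1 then y i * y j else 0)
      = ∑ k ∈ range (m - 1), y k * y (k + 1) := by
    rw [Finset.sum_comm]
    rw [Finset.sum_congr rfl (fun j (hj : j ∈ range m) =>
      Finset.sum_ite_eq' (range m) (j + 1) (fun i => y i * y j))]
    obtain ⟨n, rfl⟩ : ∃ n, m = n + 1 := ⟨m - 1, by omega⟩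
    rw [Finset.sum_range_succ, if_neg (by simp), add_zero]
    simp only [Nat.add_sub_cancel]
    refine Finset.sum_congr rfl fun k hk => ?_
    rw [if_pos (by simp only [mem_range] at hk ⊢; omega), mul_comm]
  have h4 : ∑ i ∈ range m, ∑ j ∈ range m,
      e * (if j = m - 1 then (if i = 0 then y i * y j else 0) else 0)
      = e * (y 0 * y (m - 1)) := by
    simp only [← Finset.mul_sum]
    congr 1
    rw [Finset.sum_congr rfl (fun i (hi : i ∈ range m) =>
      Finset.sum_ite_eq' (range m) (m - 1) (fun j => if i = 0 then y i * y j else 0))]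
    simp only [if_pos (mem_range.mpr (by omega : m - 1 < m))]
    rw [Finset.sum_ite_eq' (range m) 0, if_pos (mem_range.mpr (by omega))]
  have h5 : ∑ i ∈ range m, ∑ j ∈ range m,
      e * (if j = 0 then (if i = m - 1 then y i * y j else 0) else 0)
      = e * (y (m - 1) * y 0) := by
    simp only [← Finset.mul_sum]
    congr 1
    rw [Finset.sum_congr rfl (fun i (hi : i ∈ range m) =>
      Finset.sum_ite_eq' (range m) 0 (fun j => if i = m - 1 then y i * y j else 0))]
    simp only [if_pos (mem_range.mpr (by omega : 0 < m))]
    rw [Finset.sum_ite_eq' (range m) (m - 1), if_pos (mem_range.mpr (by omega))]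
  rw [h1, h2, h3, h4, h5]
  ring

lemma Qaux_sq (m : ℕ) (hm : 3 ≤ m) (e : ℝ) (he : e ^ 2 = 1) (y : ℕ → ℝ) :
    ∑ i ∈ range m, ∑ j ∈ range m,
      y i * ((if i = j then (2:ℝ)
        else if i + 1 = j ∨ j + 1 = i then 1
        else if (i = 0 ∧ j = m - 1) ∨ (j = 0 ∧ i = m - 1) then e else 0) * y j)
    = ∑ k ∈ range (m - 1), (y k + y (k + 1)) ^ 2 + (y (m - 1) + e * y 0) ^ 2 := by
  rw [Qaux_sum m hm e y]
  have hs : ∑ k ∈ range (m - 1), y (k + 1) ^ 2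
      = ∑ k ∈ range (m - 1), y k ^ 2 + y (m - 1) ^ 2 - y 0 ^ 2 := by
    obtain ⟨n, rfl⟩ : ∃ n, m = n + 1 := ⟨m - 1, by omega⟩
    simp only [Nat.add_sub_cancel]
    have h1 := Finset.sum_range_succ (fun i => y i ^ 2) n
    have h2 := Finset.sum_range_succ' (fun i => y i ^ 2) n
    linarith [h1.symm.trans h2]
  have expand : ∑ k ∈ range (m - 1), (y k + y (k + 1)) ^ 2
      = ∑ k ∈ range (m - 1), y k ^ 2 + ∑ k ∈ range (m - 1), y (k + 1) ^ 2
        + 2 * ∑ k ∈ range (m - 1), y k * y (k + 1) := by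
    rw [Finset.mul_sum, ← Finset.sum_add_distrib, ← Finset.sum_add_distrib]
    exact Finset.sum_congr rfl fun k _ => by ring
  have hsum : ∑ i ∈ range m, y i ^ 2
      = ∑ k ∈ range (m - 1), y k ^ 2 + y (m - 1) ^ 2 := by
    obtain ⟨n, rfl⟩ : ∃ n, m = n + 1 := ⟨m - 1, by omega⟩
    simp only [Nat.add_sub_cancel]
    exact Finset.sum_range_succ (fun i => y i ^ 2) n
  rw [expand, hs, hsum]
  linear_combination (-(y 0) ^ 2) * he

/-- Extension of a vector on `Fin m` to `ℕ` by zero. -/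
def QauxY (m : ℕ) (x : Fin m → ℝ) (n : ℕ) : ℝ := if h : n < m then x ⟨n, h⟩ else 0

/-- The real matrix obtained from `Q_m(ε)` is positive definite if and only if
either `m` is odd and `ε = 1`, or `m` is even and `ε = -1`. -/
theorem Qm_posDef_iff (m : ℕ) (hm : 3 ≤ m) (ε : ℤ) (hε : ε = 1 ∨ ε = -1)
    (Q : Matrix (Fin m) (Fin m) ℤ)
    (hQ : ∀ i j : Fin m, Q i j =
      if (i : ℕ) = (j : ℕ) then 2
      else if (i : ℕ) + 1 = (j : ℕ) ∨ (j : ℕ) + 1 = (i : ℕ) then 1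
      else if ((i : ℕ) = 0 ∧ (j : ℕ) = m - 1) ∨
              ((j : ℕ) = 0 ∧ (i : ℕ) = m - 1) then ε
      else 0) :
    (Q.map (Int.cast : ℤ → ℝ)).PosDef ↔
      (Odd m ∧ ε = 1) ∨ (Even m ∧ ε = -1) := by
  have hε2 : ((ε : ℝ)) ^ 2 = 1 := by rcases hε with rfl | rfl <;> norm_num
  set Y := QauxY m with hYdef
  -- quadratic form formula
  have key : ∀ x : Fin m → ℝ,
      x ⬝ᵥ (Q.map (Int.cast : ℤ → ℝ)).mulVec x
      = ∑ k ∈ range (m - 1), (Y x k + Y x (k + 1)) ^ 2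
        + (Y x (m - 1) + (ε : ℝ) * Y x 0) ^ 2 := by
    intro x
    have hcell : ∀ i j : Fin m, (Q.map (Int.cast : ℤ → ℝ)) i j
        = (if (i : ℕ) = (j : ℕ) then (2:ℝ)
          else if (i : ℕ) + 1 = (j : ℕ) ∨ (j : ℕ) + 1 = (i : ℕ) then 1
          else if ((i : ℕ) = 0 ∧ (j : ℕ) = m - 1) ∨ ((j : ℕ) = 0 ∧ (i : ℕ) = m - 1)
            then (ε : ℝ) else 0) := by
      intro i j
      rw [Matrix.map_apply, hQ i j]
      split_ifs <;> simp
    have hYx : ∀ i : Fin m, x i = Y x (i : ℕ) := by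
      intro i; simp [hYdef, QauxY, i.isLt]
    have step1 : x ⬝ᵥ (Q.map (Int.cast : ℤ → ℝ)).mulVec x
        = ∑ i : Fin m, Y x (i : ℕ) * ∑ j : Fin m,
          ((if (i : ℕ) = (j : ℕ) then (2:ℝ)
          else if (i : ℕ) + 1 = (j : ℕ) ∨ (j : ℕ) + 1 = (i : ℕ) then 1
          else if ((i : ℕ) = 0 ∧ (j : ℕ) = m - 1) ∨ ((j : ℕ) = 0 ∧ (i : ℕ) = m - 1)
            then (ε : ℝ) else 0) * Y x (j : ℕ)) := by
      simp only [dotProduct, Matrix.mulVec, dotProduct]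
      refine Finset.sum_congr rfl fun i _ => ?_
      rw [← hYx i]
      congr 1
      refine Finset.sum_congr rfl fun j _ => ?_
      rw [hcell i j, ← hYx j]
    rw [step1]
    have step2 : ∀ i : Fin m, (∑ j : Fin m,
          ((if (i : ℕ) = (j : ℕ) then (2:ℝ)
          else if (i : ℕ) + 1 = (j : ℕ) ∨ (j : ℕ) + 1 = (i : ℕ) then 1
          else if ((i : ℕ) = 0 ∧ (j : ℕ) = m - 1) ∨ ((j : ℕ) = 0 ∧ (i : ℕ) = m - 1)
            then (ε : ℝ) else 0) * Y x (j : ℕ)))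
        = ∑ j ∈ range m,
          ((if (i : ℕ) = j then (2:ℝ)
          else if (i : ℕ) + 1 = j ∨ j + 1 = (i : ℕ) then 1
          else if ((i : ℕ) = 0 ∧ j = m - 1) ∨ (j = 0 ∧ (i : ℕ) = m - 1)
            then (ε : ℝ) else 0) * Y x j) := by
      intro i
      exact Fin.sum_univ_eq_sum_range (fun b =>
        (if (i : ℕ) = b then (2:ℝ)
          else if (i : ℕ) + 1 = b ∨ b + 1 = (i : ℕ) then 1
          else if ((i : ℕ) = 0 ∧ b = m - 1) ∨ (b = 0 ∧ (i : ℕ) = m - 1)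
            then (ε : ℝ) else 0) * Y x b) m
    simp only [step2]
    rw [Fin.sum_univ_eq_sum_range (fun a => Y x a * ∑ j ∈ range m,
          ((if a = j then (2:ℝ)
          else if a + 1 = j ∨ j + 1 = a then 1
          else if (a = 0 ∧ j = m - 1) ∨ (j = 0 ∧ a = m - 1)
            then (ε : ℝ) else 0) * Y x j)) m]
    simp only [Finset.mul_sum]
    exact Qaux_sq m hm (ε : ℝ) hε2 (Y x)
  -- Hermitian
  have herm : (Q.map (Int.cast : ℤ → ℝ)).IsHermitian := by
    have hsymm : ∀ i j : Fin m, Q i j = Q j i := by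
      intro i j
      rw [hQ i j, hQ j i]
      split_ifs <;> first | rfl | (exfalso; omega)
    ext i j
    simp [Matrix.conjTranspose_apply, Matrix.map_apply, hsymm j i]
  -- main characterization
  have main : (Q.map (Int.cast : ℤ → ℝ)).PosDef ↔ (-1 : ℝ) ^ (m - 1) = (ε : ℝ) := by
    constructor
    · intro hPD
      by_contra hne
      have hsgn : (-1 : ℝ) ^ (m - 1) = -(ε : ℝ) := by
        rcases Nat.even_or_odd (m - 1) with h | h <;> rcases hε with rfl | rfl <;>
          rw [h.neg_one_pow] at hne ⊢ <;> norm_num at *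
      set v : Fin m → ℝ := fun i => (-1 : ℝ) ^ (i : ℕ) with hv
      have hv0 : v ≠ 0 := by
        intro h
        have := congrFun h ⟨0, by omega⟩
        simp [hv] at this
      have hq := hPD.dotProduct_mulVec_pos hv0
      rw [star_trivial, key v] at hq
      have hz1 : ∀ k ∈ range (m - 1), (Y v k + Y v (k + 1)) ^ 2 = 0 := by
        intro k hk
        simp only [mem_range] at hk
        have h1 : Y v k = (-1 : ℝ) ^ k := by
          simp [hYdef, QauxY, (by omega : k < m), hv]
        have h2 : Y v (k + 1) = (-1 : ℝ) ^ (k + 1) := by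
          simp [hYdef, QauxY, (by omega : k + 1 < m), hv]
        rw [h1, h2]; ring
      rw [Finset.sum_eq_zero hz1] at hq
      have h3 : Y v (m - 1) = (-1 : ℝ) ^ (m - 1) := by
        simp [hYdef, QauxY, (by omega : m - 1 < m), hv]
      have h4 : Y v 0 = 1 := by
        simp [hYdef, QauxY, (by omega : 0 < m), hv]
      rw [h3, h4, hsgn] at hq
      have : (-(ε : ℝ) + (ε : ℝ) * 1) = 0 := by ring
      rw [this] at hq
      norm_num at hq
    · intro hsgn
      refine Matrix.PosDef.of_dotProduct_mulVec_pos herm fun x hx => ?_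
      rw [star_trivial, key x]
      have hker : ∑ k ∈ range (m - 1), (Y x k + Y x (k + 1)) ^ 2
          + (Y x (m - 1) + (ε : ℝ) * Y x 0) ^ 2 = 0 → x = 0 := by
        intro h0
        have hSnn : (0:ℝ) ≤ ∑ k ∈ range (m - 1), (Y x k + Y x (k + 1)) ^ 2 :=
          Finset.sum_nonneg fun k _ => sq_nonneg _
        have htnn : (0:ℝ) ≤ (Y x (m - 1) + (ε : ℝ) * Y x 0) ^ 2 := sq_nonneg _
        have hS0 : ∑ k ∈ range (m - 1), (Y x k + Y x (k + 1)) ^ 2 = 0 := by linarith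
        have ht0 : (Y x (m - 1) + (ε : ℝ) * Y x 0) ^ 2 = 0 := by linarith
        have hstep : ∀ k ∈ range (m - 1), Y x (k + 1) = -Y x k := by
          intro k hk
          have h := (Finset.sum_eq_zero_iff_of_nonneg
            (fun k _ => sq_nonneg (Y x k + Y x (k + 1)))).mp hS0 k hk
          have h2 : Y x k + Y x (k + 1) = 0 := by
            have := sq_eq_zero_iff.mp h
            linarith
          linarith
        have hall : ∀ k, k < m → Y x k = (-1 : ℝ) ^ k * Y x 0 := by
          intro k
          induction k with
          | zero => intro _; simp
          | succ n ih =>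
            intro hk
            rw [hstep n (mem_range.mpr (by omega)), ih (by omega)]
            ring
        have hY0 : Y x 0 = 0 := by
          have hm1 : Y x (m - 1) + (ε : ℝ) * Y x 0 = 0 := sq_eq_zero_iff.mp ht0
          have h5 := hall (m - 1) (by omega)
          rw [h5, hsgn] at hm1
          have h6 : (ε : ℝ) * Y x 0 = 0 := by linarith
          have : Y x 0 = (ε : ℝ) ^ 2 * Y x 0 := by rw [hε2]; ring
          rw [this]
          calc (ε : ℝ) ^ 2 * Y x 0 = (ε : ℝ) * ((ε : ℝ) * Y x 0) := by ring
            _ = 0 := by rw [h6, mul_zero]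
        funext i
        have h7 := hall (i : ℕ) i.isLt
        have h8 : Y x (i : ℕ) = x i := by simp [hYdef, QauxY, i.isLt]
        show x i = 0
        rw [← h8, h7, hY0, mul_zero]
      refine lt_of_le_of_ne (by positivity) fun h0 => hx (hker h0.symm)
  rw [main]
  rcases hε with rfl | rfl <;> rcases Nat.even_or_odd m with hp | hp
  · have hodd : Odd (m - 1) := Nat.Even.sub_odd (by omega) hp odd_one
    rw [hodd.neg_one_pow]
    simp [Nat.not_odd_iff_even.mpr hp]
    norm_num
  · have heven : Even (m - 1) := Nat.Odd.sub_odd hp odd_one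
    rw [heven.neg_one_pow]
    simp [hp]
  · have hodd : Odd (m - 1) := Nat.Even.sub_odd (by omega) hp odd_one
    rw [hodd.neg_one_pow]
    simp [hp]
  · have heven : Even (m - 1) := Nat.Odd.sub_odd hp odd_one
    rw [heven.neg_one_pow]
    simp [Nat.not_even_iff_odd.mpr hp]
    norm_num
end
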